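/- arXiv:2212.02424 — 12 statements merged into one kernel-verified Lean document; each statement's English description precedes it below -/
import Mathlib

section
/- Let Π_V be a flow on a simplicial complex K, let A ⊆ K be V-compatible, and let σ ∈ A. Then the following are equivalent: (1) there is a full solution through σ⁻ contained in A; (2) there is a full solution through σ⁺ contained in A; (3) there is a full solution through σ contained in A. -/
open Finset

variable {α : Type*} [DecidableEq α]

/-- `K` is a finite simplicial complex: a finite collection of nonempty finite sets
closed under taking nonempty subsets. -/
def IsComplex (K : Finset (Finset α)) : Prop :=
  ∀ σ ∈ K, σ.Nonempty ∧ ∀ τ ⊆ σ, τ.Nonempty → τ ∈ K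

/-- `V` is a discrete vector field on `K`: an injective partial self-map (encoded via
`Option`) such that `V σ` is `σ` itself or a cofacet of `σ`, `dom V ∪ image V = K`,
and `dom V ∩ image V = Fix V`. -/
def IsDVF (K : Finset (Finset α)) (V : Finset α → Option (Finset α)) : Prop :=
  (∀ σ τ, V σ = some τ → σ ∈ K ∧ τ ∈ K ∧ (τ = σ ∨ (σ ⊆ τ ∧ τ.card = σ.card + 1))) ∧
  (∀ σ σ' τ, V σ = some τ → V σ' = some τ → σ = σ') ∧
  (∀ σ ∈ K, (V σ).isSome = true ∨ ∃ τ, V τ = some σ) ∧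
  (∀ σ, (V σ).isSome = true → (∃ τ, V τ = some σ) → V σ = some σ) ∧
  (∀ σ, σ ∉ K → V σ = none)

/-- The flow `Π_V` associated to a discrete vector field `V`:
`Cl σ` if `σ` is fixed, `{V σ}` if `σ ∈ dom V \ Fix V`,
and `Ex σ \ {V⁻¹ σ}` if `σ ∈ image V \ Fix V` (i.e. `σ ∉ dom V`). -/
def flow (V : Finset α → Option (Finset α)) (σ : Finset α) : Set (Finset α) :=
  match V σ with
  | some β => if β = σ then {τ | τ.Nonempty ∧ τ ⊆ σ} else {β}
  | none => {τ | τ.Nonempty ∧ τ ⊆ σ ∧ τ ≠ σ ∧ V τ ≠ some σ}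

/-- `σ →_V τ`: there is a nontrivial solution of the flow `Π_V` from `σ` to `τ`. -/
def Connects (V : Finset α → Option (Finset α)) (σ τ : Finset α) : Prop :=
  ∃ (n : ℕ) (ρ : ℕ → Finset α), 1 ≤ n ∧ ρ 0 = σ ∧ ρ n = τ ∧
    ∀ i < n, ρ (i + 1) ∈ flow V (ρ i)

/-- `σ⁺ = V σ` if `σ ∈ dom V`, else `σ`. -/
def vplus (V : Finset α → Option (Finset α)) (σ : Finset α) : Finset α := (V σ).getD σ

open Classical in
/-- `σ⁻ = σ` if `σ ∈ dom V`, else `V⁻¹ σ` (when it exists). -/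
noncomputable def vminus (V : Finset α → Option (Finset α)) (σ : Finset α) : Finset α :=
  if (V σ).isSome = true then σ
  else if h : ∃ τ, V τ = some σ then h.choose else σ

/-- `A` is `V`-compatible: for all `σ`, `σ⁻ ∈ A ↔ σ⁺ ∈ A`; equivalently, for every
arrow `V σ = some τ`, `σ ∈ A ↔ τ ∈ A`. -/
def VCompatible (V : Finset α → Option (Finset α)) (A : Set (Finset α)) : Prop :=
  ∀ σ τ, V σ = some τ → (σ ∈ A ↔ τ ∈ A)

/-- There is a full solution of `Π_V`, contained in `A`, passing through `τ`. -/
def FullSolThrough (V : Finset α → Option (Finset α)) (A : Set (Finset α))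
    (τ : Finset α) : Prop :=
  ∃ ρ : ℤ → Finset α, (∀ i, ρ i ∈ A) ∧ (∀ i, ρ (i + 1) ∈ flow V (ρ i)) ∧ ∃ i, ρ i = τ

/-- Insert an element `μ` into a full solution at position `i`. -/
lemma fullSol_insert {V : Finset α → Option (Finset α)} {A : Set (Finset α)}
    (ρ : ℤ → Finset α) (hA : ∀ i, ρ i ∈ A) (hstep : ∀ i, ρ (i + 1) ∈ flow V (ρ i))
    (i : ℤ) (μ : Finset α) (hμA : μ ∈ A)
    (h1 : μ ∈ flow V (ρ (i - 1))) (h2 : ρ i ∈ flow V μ) :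
    FullSolThrough V A μ := by
  refine ⟨fun j => if j < i then ρ j else if j = i then μ else ρ (j - 1), ?_, ?_,
    ⟨i, by simp⟩⟩
  · intro j; dsimp only; split_ifs
    · exact hA j
    · exact hμA
    · exact hA _
  · intro j; dsimp only
    rcases lt_trichotomy j (i - 1) with h | h | h
    · rw [if_pos (by omega : j + 1 < i), if_pos (by omega : j < i)]
      exact hstep j
    · rw [if_neg (by omega : ¬ j + 1 < i), if_pos (by omega : j + 1 = i),
        if_pos (by omega : j < i), (by omega : j = i - 1)]
      exact h1
    · rcases eq_or_lt_of_le (by omega : i ≤ j) with h' | h'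
      · rw [if_neg (by omega : ¬ j + 1 < i), if_neg (by omega : j + 1 ≠ i),
          if_neg (by omega : ¬ j < i), if_pos (by omega : j = i),
          (by omega : j + 1 - 1 = i)]
        exact h' ▸ h2
      · rw [if_neg (by omega : ¬ j + 1 < i), if_neg (by omega : j + 1 ≠ i),
          if_neg (by omega : ¬ j < i), if_neg (by omega : j ≠ i),
          (by omega : j + 1 - 1 = j - 1 + 1)]
        exact hstep (j - 1)

/-- If `V μ = some β` is a genuine arrow with `μ ∈ A`, then full solutions in `A`
through `μ` and through `β` coexist. -/
lemma fullSol_arrow {K : Finset (Finset α)} {V : Finset α → Option (Finset α)}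
    (hK : IsComplex K) (hV : IsDVF K V) {A : Set (Finset α)}
    (hcomp : VCompatible V A) {μ β : Finset α}
    (hμβ : V μ = some β) (hne : β ≠ μ) (hμA : μ ∈ A) :
    FullSolThrough V A μ ↔ FullSolThrough V A β := by
  obtain ⟨hV1, hV2, hV3, hV4, hV5⟩ := hV
  obtain ⟨hμK, hβK, hdim⟩ := hV1 μ β hμβ
  have hμsubβ : μ ⊆ β := by
    rcases hdim with h | h
    · exact absurd h hne
    · exact h.1
  have hμne : μ.Nonempty := (hK μ hμK).1
  have hflowμ : flow V μ = {β} := by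
    unfold flow; rw [hμβ]; simp [hne]
  constructor
  · rintro ⟨ρ, hA, hstep, i, hi⟩
    refine ⟨ρ, hA, hstep, i + 1, ?_⟩
    have := hstep i
    rw [hi, hflowμ] at this
    exact this
  · rintro ⟨ρ, hA, hstep, i, hi⟩
    have hβA : β ∈ A := hi ▸ hA i
    have hμA' : μ ∈ A := (hcomp μ β hμβ).mpr hβA
    have hstepν : β ∈ flow V (ρ (i - 1)) := by
      have := hstep (i - 1)
      rwa [(by omega : i - 1 + 1 = i), hi] at this
    rcases hν : V (ρ (i - 1)) with _ | γ
    · -- ρ (i-1) not in dom V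
      have hmem : β ∈ {τ | τ.Nonempty ∧ τ ⊆ ρ (i - 1) ∧ τ ≠ ρ (i - 1) ∧
          V τ ≠ some (ρ (i - 1))} := by
        have : flow V (ρ (i - 1)) = {τ | τ.Nonempty ∧ τ ⊆ ρ (i - 1) ∧ τ ≠ ρ (i - 1) ∧
            V τ ≠ some (ρ (i - 1))} := by unfold flow; rw [hν]
        rwa [this] at hstepν
      obtain ⟨-, hβsub, hβneν, hβV⟩ := hmem
      refine fullSol_insert ρ hA hstep i μ hμA' ?_ ?_
      · have : flow V (ρ (i - 1)) = {τ | τ.Nonempty ∧ τ ⊆ ρ (i - 1) ∧ τ ≠ ρ (i - 1) ∧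
            V τ ≠ some (ρ (i - 1))} := by unfold flow; rw [hν]
        rw [this]
        refine ⟨hμne, hμsubβ.trans hβsub, ?_, ?_⟩
        · rintro rfl; rw [hμβ] at hν; exact absurd hν (by simp)
        · rw [hμβ]; intro h
          exact hβneν (Option.some.inj h)
      · rw [hflowμ, hi]; rfl
    · by_cases hγν : γ = ρ (i - 1)
      · -- fixed point case
        subst hγν
        have hflowν : flow V (ρ (i - 1)) = {τ | τ.Nonempty ∧ τ ⊆ ρ (i - 1)} := by
          unfold flow; rw [hν]; simp
        refine fullSol_insert ρ hA hstep i μ hμA' ?_ ?_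
        · rw [hflowν]
          rw [hflowν] at hstepν
          exact ⟨hμne, hμsubβ.trans hstepν.2⟩
        · rw [hflowμ, hi]; rfl
      · -- ρ (i-1) maps to γ ≠ itself, so flow = {γ}, hence γ = β and ρ (i-1) = μ
        have hflowν : flow V (ρ (i - 1)) = {γ} := by
          unfold flow; rw [hν]; simp [hγν]
        rw [hflowν] at hstepν
        have hγβ : γ = β := hstepν.symm
        subst hγβ
        have : ρ (i - 1) = μ := hV2 _ _ _ hν hμβ
        exact ⟨ρ, hA, hstep, i - 1, this⟩

/-- For a `V`-compatible `A ⊆ K` and `σ ∈ A`, the existence of full solutions in `A`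
through `σ⁻`, through `σ⁺`, and through `σ` are all equivalent. -/
theorem stmt2 (K : Finset (Finset α)) (V : Finset α → Option (Finset α))
    (hK : IsComplex K) (hV : IsDVF K V) (A : Set (Finset α))
    (hAK : ∀ σ ∈ A, σ ∈ K) (hcomp : VCompatible V A) (σ : Finset α) (hσ : σ ∈ A) :
    (FullSolThrough V A (vminus V σ) ↔ FullSolThrough V A (vplus V σ)) ∧
    (FullSolThrough V A (vplus V σ) ↔ FullSolThrough V A σ) := by
  rcases hσV : V σ with _ | β
  · -- V σ = none
    have hvplus : vplus V σ = σ := by simp [vplus, hσV]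
    have hσK := hAK σ hσ
    have hex : ∃ τ, V τ = some σ := by
      rcases hV.2.2.1 σ hσK with h | h
      · rw [hσV] at h; exact absurd h (by simp)
      · exact h
    have hμV : V hex.choose = some σ := hex.choose_spec
    have hvminus : vminus V σ = hex.choose := by
      rw [vminus, if_neg (by rw [hσV]; simp), dif_pos hex]
    have hne : σ ≠ hex.choose := by
      intro h
      rw [← h, hσV] at hμV
      exact absurd hμV (by simp)
    have hμA : hex.choose ∈ A := (hcomp _ σ hμV).mpr hσ
    rw [hvplus, hvminus]
    exact ⟨fullSol_arrow hK hV hcomp hμV hne hμA, Iff.rfl⟩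
  · -- V σ = some β
    have hvminus : vminus V σ = σ := by rw [vminus, if_pos (by rw [hσV]; rfl)]
    have hvplus : vplus V σ = β := by simp [vplus, hσV]
    rw [hvminus, hvplus]
    by_cases hβσ : β = σ
    · subst hβσ; exact ⟨Iff.rfl, Iff.rfl⟩
    · have h := fullSol_arrow hK hV hcomp hσV hβσ hσ
      exact ⟨h, h.symm⟩
end

section
/- A discrete vector field V on a simplicial complex K is acyclic (has no nontrivial closed V-path) if and only if its associated flow Π_V is acyclic, i.e., for all σ, τ ∈ K, if σ →_V τ and τ →_V σ then σ = τ. -/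
open Finset

variable {α : Type*} [DecidableEq α]

/-- `V` is acyclic: there is no nontrivial closed `V`-path
`α₀, β₀, α₁, ..., β_{n-1}, α_n = α₀`. -/
def AcyclicVF (V : Finset α → Option (Finset α)) : Prop :=
  ¬ ∃ (n : ℕ) (a b : ℕ → Finset α), 1 ≤ n ∧
    (∀ i < n, V (a i) = some (b i) ∧ (b i).card = (a i).card + 1 ∧
      a (i + 1) ⊆ b i ∧ (a (i + 1)).card = (a i).card ∧ a (i + 1) ≠ a i) ∧
    a n = a 0

lemma flow_elim {V : Finset α → Option (Finset α)} {x y : Finset α} (h : y ∈ flow V x) :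
    (V x = some x ∧ y.Nonempty ∧ y ⊆ x) ∨
    (∃ β, V x = some β ∧ β ≠ x ∧ y = β) ∨
    (V x = none ∧ y.Nonempty ∧ y ⊆ x ∧ y ≠ x ∧ V y ≠ some x) := by
  rcases hvx : V x with _ | β
  · simp only [flow, hvx] at h
    exact Or.inr (Or.inr ⟨rfl, h⟩)
  · simp only [flow, hvx] at h
    by_cases hβ : β = x
    · rw [if_pos hβ] at h
      subst hβ
      exact Or.inl ⟨rfl, h⟩
    · rw [if_neg hβ] at h
      exact Or.inr (Or.inl ⟨β, rfl, hβ, h⟩)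

lemma forward_aux {K : Finset (Finset α)} {V : Finset α → Option (Finset α)}
    (hV : IsDVF K V) (hA : AcyclicVF V)
    {P : ℕ → Finset α} {m : ℕ} (hm : 2 ≤ m)
    (hstep : ∀ i, P (i + 1) ∈ flow V (P i))
    (hper : ∀ i, P (i + m) = P i) :
    ∀ i j, P i = P j := by
  classical
  obtain ⟨hcof, hinj, -, hfix, -⟩ := hV
  have hm0 : 0 < m := by omega
  -- periodicity for multiples
  have hperMul : ∀ q i, P (i + q * m) = P i := by
    intro q
    induction q with
    | zero => intro i; simp
    | succ q ih =>
      intro i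
      have : i + (q + 1) * m = (i + q * m) + m := by ring
      rw [this, hper, ih]
  have hmod : ∀ i, P i = P (i % m) := by
    intro i
    conv_lhs => rw [show i = i % m + (i / m) * m by
      rw [Nat.mod_add_div' i m]]
    rw [hperMul]
  -- maximal cardinality
  obtain ⟨j₀, hj₀m, hj₀⟩ := Finset.exists_max_image (range m) (fun j => (P j).card)
      ⟨0, mem_range.2 hm0⟩
  set c := (P j₀).card with hc
  have hcle : ∀ i, (P i).card ≤ c := by
    intro i
    rw [hmod i]
    exact hj₀ _ (mem_range.2 (Nat.mod_lt _ hm0))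
  -- L1 : entering a maximal simplex
  have L1 : ∀ i, (P (i + 1)).card = c →
      (V (P i) = some (P i) ∧ P i = P (i + 1)) ∨
      (V (P i) = some (P (i + 1)) ∧ P i ≠ P (i + 1)) := by
    intro i hcc
    rcases flow_elim (hstep i) with ⟨hf, -, hsub⟩ | ⟨β, hb, hβ, hy⟩ | ⟨-, -, hsub, hne, -⟩
    · left
      exact ⟨hf, (Finset.eq_of_subset_of_card_le hsub (by rw [hcc]; exact hcle i)).symm⟩
    · right
      rw [← hy] at hb hβ
      exact ⟨hb, hβ.symm⟩
    · exfalso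
      have := Finset.card_lt_card ⟨hsub, fun hh => hne (Finset.Subset.antisymm hsub hh)⟩
      have := hcle i
      omega
  -- L2 : fixed maximal simplices propagate backwards
  have L2 : ∀ i, (P (i + 1)).card = c → V (P (i + 1)) = some (P (i + 1)) → P i = P (i + 1) := by
    intro i hcc hfx
    rcases L1 i hcc with ⟨-, h⟩ | ⟨hb, hne⟩
    · exact h
    · exact absurd (hinj _ _ _ hb hfx) hne
  -- constancy from a fixed maximal simplex
  have Bback : ∀ j, (P j).card = c → V (P j) = some (P j) → ∀ t, P (j + t) = P j := by
    intro j hcc hfx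
    have key : ∀ j', P j' = P j → ∀ s ≤ m, P (j' + (m - s)) = P j := by
      intro j' hj' s
      induction s with
      | zero => intro _; simpa [hj'] using hper j'
      | succ s ih =>
        intro hs
        have ihh := ih (by omega)
        have harith : j' + (m - s) = (j' + (m - (s + 1))) + 1 := by omega
        rw [harith] at ihh
        have := L2 (j' + (m - (s + 1))) (by rw [ihh]; exact hcc) (by rw [ihh]; exact hfx)
        rw [this, ihh]
    have key' : ∀ j', P j' = P j → ∀ s ≤ m, P (j' + s) = P j := by
      intro j' hj' s hs
      have := key j' hj' (m - s) (by omega)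
      rwa [Nat.sub_sub_self hs] at this
    intro t
    -- write t = (t / m) * m + t % m
    have h1 : P (j + (t / m) * m) = P j := hperMul _ _
    have h2 := key' (j + (t / m) * m) h1 (t % m) (le_of_lt (Nat.mod_lt _ hm0))
    have e : j + (t / m) * m + t % m = j + t := by
      have := Nat.div_add_mod' t m
      omega
    rwa [e] at h2
  by_cases hex : ∃ j, (P j).card = c ∧ V (P j) = some (P j)
  · -- constant case
    obtain ⟨j, hjc, hjf⟩ := hex
    have hconst : ∀ t, P t = P j := by
      intro t
      have hbb := Bback j hjc hjf (t + j * m - j)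
      have hjle : j ≤ j * m := by
        calc j = j * 1 := (mul_one j).symm
        _ ≤ j * m := Nat.mul_le_mul_left j (by omega)
      have e : j + (t + j * m - j) = t + j * m := by omega
      rw [e, hperMul] at hbb
      exact hbb
    intro i j'
    rw [hconst i, hconst j']
  · -- no fixed maximal simplex : build a V-path cycle, contradiction
    exfalso
    push_neg at hex
    have L1' : ∀ i, (P (i + 1)).card = c →
        V (P i) = some (P (i + 1)) ∧ P i ≠ P (i + 1) ∧
        (P (i + 1)).card = (P i).card + 1 ∧ V (P (i + 1)) = none := by
      intro i hcc
      rcases L1 i hcc with ⟨hfx, heq⟩ | ⟨hb, hne⟩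
      · rw [heq] at hfx
        exact absurd hfx (hex _ hcc)
      · refine ⟨hb, hne, ?_, ?_⟩
        · rcases (hcof _ _ hb).2.2 with h | ⟨-, h⟩
          · exact absurd h.symm hne
          · exact h
        · rcases hsome : V (P (i + 1)) with - | γ
          · rfl
          · exact absurd (hfix (P (i + 1)) (by rw [hsome]; rfl) ⟨_, hb⟩) (hex _ hcc)
    -- L4 : the key structure step
    have L4 : ∀ i, 1 ≤ i → (P i).card = c →
        (P (i + 2)).card = c ∧ V (P (i + 1)) = some (P (i + 2)) ∧
        (P (i + 2)).card = (P (i + 1)).card + 1 ∧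
        P (i + 1) ⊆ P i ∧ V (P (i + 1)) ≠ some (P i) := by
      intro i hi hcc
      have hvnone : V (P i) = none := by
        have h := L1' (i - 1) (by rw [Nat.sub_add_cancel hi]; exact hcc)
        rw [Nat.sub_add_cancel hi] at h
        exact h.2.2.2
      rcases flow_elim (hstep i) with ⟨hfx, -⟩ | ⟨β, hb, -, -⟩ | ⟨-, -, hsub, hnee, hnv⟩
      · rw [hvnone] at hfx; cases hfx
      · rw [hvnone] at hb; cases hb
      -- find the next maximal index
      have hub : ∃ d, 0 < d ∧ d ≤ m ∧ (P (i + d)).card = c :=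
        ⟨m, hm0, le_refl m, by rw [hper]; exact hcc⟩
      obtain ⟨d, ⟨hd0, hdm, hdc⟩, hmin⟩ :
          ∃ d, (0 < d ∧ d ≤ m ∧ (P (i + d)).card = c) ∧
            ∀ k, k < d → ¬(0 < k ∧ k ≤ m ∧ (P (i + k)).card = c) :=
        ⟨Nat.find hub, Nat.find_spec hub, fun k hk => Nat.find_min hub hk⟩
      have hdge2 : 2 ≤ d := by
        rcases Nat.lt_or_ge d 2 with h | h
        · exfalso
          have hd1 : d = 1 := by omega
          subst hd1
          have hlt := Finset.card_lt_card (Finset.ssubset_iff_subset_ne.2 ⟨hsub, hnee⟩)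
          have := hcle i
          omega
        · exact h
      -- facts at i + (d-1)
      have h1 := L1' (i + (d - 1)) (by rw [show i + (d - 1) + 1 = i + d by omega]; exact hdc)
      rw [show i + (d - 1) + 1 = i + d by omega] at h1
      obtain ⟨hb', hne', hcard', hvn'⟩ := h1
      -- the step into i + (d-1)
      have hstep2 := hstep (i + (d - 2))
      rw [show i + (d - 2) + 1 = i + (d - 1) by omega] at hstep2
      have hd2 : d = 2 := by
        by_contra hne3
        have hd3 : 3 ≤ d := by omega
        have hcc2 : (P (i + (d - 2))).card = c → False := by
          intro h
          exact hmin (d - 2) (by omega) ⟨by omega, by omega, h⟩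
        rcases flow_elim hstep2 with ⟨hfx2, -, hsub2⟩ | ⟨β, hb2, -, hy2⟩ | ⟨-, -, hsub2, hne2, -⟩
        · by_cases heq2 : P (i + (d - 1)) = P (i + (d - 2))
          · rw [← heq2] at hfx2
            rw [hb'] at hfx2
            have : P (i + d) = P (i + (d - 1)) := by injection hfx2
            rw [this] at hcard'
            omega
          · have hlt := Finset.card_lt_card (Finset.ssubset_iff_subset_ne.2 ⟨hsub2, heq2⟩)
            have h5 := hcle (i + (d - 2))
            exact hcc2 (by omega)
        · rw [← hy2] at hb2
          have hfx3 := hfix (P (i + (d - 1))) (by rw [hb']; rfl) ⟨_, hb2⟩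
          rw [hb'] at hfx3
          have : P (i + d) = P (i + (d - 1)) := by injection hfx3
          rw [this] at hcard'
          omega
        · have hlt := Finset.card_lt_card (Finset.ssubset_iff_subset_ne.2 ⟨hsub2, hne2⟩)
          have h5 := hcle (i + (d - 2))
          exact hcc2 (by omega)
      subst hd2
      rw [show i + (2 - 1) = i + 1 by norm_num] at hb' hcard'
      exact ⟨hdc, hb', hcard', hsub, hnv⟩
    -- iterate from a maximal index ≥ 1
    set i₀ := j₀ + m with hi₀
    have hi₀1 : 1 ≤ i₀ := by omega
    have hi₀c : (P i₀).card = c := by rw [hper]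
    have hcc2 : ∀ j, (P (i₀ + 2 * j)).card = c := by
      intro j
      induction j with
      | zero => simpa using hi₀c
      | succ j ih =>
        have := (L4 (i₀ + 2 * j) (by omega) ih).1
        rwa [show i₀ + 2 * j + 2 = i₀ + 2 * (j + 1) by ring] at this
    apply hA
    refine ⟨m, fun j => P (i₀ + 2 * j + 1), fun j => P (i₀ + 2 * j + 2), by omega, ?_, ?_⟩
    · intro j hj
      dsimp only
      have h1 := L4 (i₀ + 2 * j) (by omega) (hcc2 j)
      have h2 := L4 (i₀ + 2 * (j + 1)) (by omega) (hcc2 (j + 1))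
      rw [show i₀ + 2 * (j + 1) = i₀ + 2 * j + 2 by ring] at h2
      rw [show i₀ + 2 * j + 2 + 1 = i₀ + 2 * (j + 1) + 1 by ring] at h2
      rw [show i₀ + 2 * j + 2 + 2 = i₀ + 2 * (j + 1) + 2 by ring] at h2
      obtain ⟨-, hv1, hcard1, -, -⟩ := h1
      obtain ⟨-, hv2, hcard2, hsub2, hnv2⟩ := h2
      refine ⟨hv1, hcard1, hsub2, ?_, ?_⟩
      · -- equal cardinalities
        have e1 := hcc2 (j + 1)
        have e2 := hcc2 (j + 2)
        rw [show i₀ + 2 * (j + 1) = i₀ + 2 * j + 2 by ring] at e1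
        rw [show i₀ + 2 * (j + 2) = i₀ + 2 * (j + 1) + 2 by ring] at e2
        omega
      · intro heq
        rw [heq, hv1] at hnv2
        exact hnv2 rfl
    · show P (i₀ + 2 * m + 1) = P (i₀ + 2 * 0 + 1)
      have hp := hperMul 2 (i₀ + 1)
      rw [show i₀ + 1 + 2 * m = i₀ + 2 * m + 1 by ring] at hp
      rw [show i₀ + 2 * 0 + 1 = i₀ + 1 by ring]
      exact hp

/-- `V` is acyclic iff its associated flow `Π_V` is acyclic. -/
theorem stmt3 (K : Finset (Finset α)) (V : Finset α → Option (Finset α))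
    (hK : IsComplex K) (hV : IsDVF K V) :
    AcyclicVF V ↔ ∀ σ τ : Finset α, Connects V σ τ → Connects V τ σ → σ = τ := by
  classical
  constructor
  · -- acyclic vector field ⇒ acyclic flow
    intro hA σ τ h1 h2
    obtain ⟨n1, ρ1, hn1, h10, h1n, hs1⟩ := h1
    obtain ⟨n2, ρ2, hn2, h20, h2n, hs2⟩ := h2
    set m := n1 + n2 with hm
    set ρ : ℕ → Finset α := fun i => if i ≤ n1 then ρ1 i else ρ2 (i - n1) with hρ
    have hρ0 : ρ 0 = σ := by simp only [hρ]; rw [if_pos (Nat.zero_le _), h10]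
    have hρn1 : ρ n1 = τ := by simp only [hρ]; rw [if_pos le_rfl, h1n]
    have hρm : ρ m = σ := by
      simp only [hρ]
      rw [if_neg (by omega), show m - n1 = n2 by omega, h2n]
    have hstep : ∀ i < m, ρ (i + 1) ∈ flow V (ρ i) := by
      intro i hi
      by_cases h : i < n1
      · have e1 : ρ i = ρ1 i := by simp only [hρ]; rw [if_pos (le_of_lt h)]
        have e2 : ρ (i + 1) = ρ1 (i + 1) := by simp only [hρ]; rw [if_pos (show i + 1 ≤ n1 by omega)]
        rw [e1, e2]
        exact hs1 i h
      · have hni : n1 ≤ i := by omega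
        have e1 : ρ i = ρ2 (i - n1) := by
          by_cases h' : i = n1
          · subst h'
            simp only [hρ]
            rw [if_pos le_rfl, Nat.sub_self, h1n, h20]
          · simp only [hρ]; rw [if_neg (by omega)]
        have e2 : ρ (i + 1) = ρ2 (i + 1 - n1) := by simp only [hρ]; rw [if_neg (by omega)]
        rw [e1, e2, show i + 1 - n1 = (i - n1) + 1 by omega]
        exact hs2 (i - n1) (by omega)
    have hm2 : 2 ≤ m := by omega
    have hm0 : 0 < m := by omega
    have Pstep : ∀ i, ρ ((i + 1) % m) ∈ flow V (ρ (i % m)) := by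
      intro i
      have him : i % m < m := Nat.mod_lt _ hm0
      have e : (i + 1) % m = (i % m + 1) % m := by
        rw [Nat.add_mod i 1 m, Nat.mod_eq_of_lt (show 1 < m by omega)]
      by_cases h : i % m + 1 < m
      · rw [e, Nat.mod_eq_of_lt h]
        exact hstep _ him
      · have hmm : i % m + 1 = m := by omega
        rw [e, hmm, Nat.mod_self]
        have h3 := hstep (i % m) him
        rw [hmm] at h3
        rw [show ρ 0 = ρ m by rw [hρ0, hρm]]
        exact h3
    have Pper : ∀ i, ρ ((i + m) % m) = ρ (i % m) := by
      intro i; rw [Nat.add_mod_right]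
    have hconst := forward_aux hV hA (P := fun i => ρ (i % m)) hm2 Pstep Pper
    have := hconst 0 n1
    rw [Nat.zero_mod, Nat.mod_eq_of_lt (show n1 < m by omega), hρ0, hρn1] at this
    exact this
  · -- acyclic flow ⇒ acyclic vector field
    intro hF
    rintro ⟨n, a, b, hn, hstep, hclose⟩
    obtain ⟨hcof, hinj, -, hfix, -⟩ := hV
    have hVab : ∀ i < n, V (a i) = some (b i) := fun i hi => (hstep i hi).1
    have hbne : ∀ i < n, b i ≠ a i := by
      intro i hi h
      have := (hstep i hi).2.1
      rw [h] at this
      omega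
    have hbnone : ∀ i < n, V (b i) = none := by
      intro i hi
      rcases h : V (b i) with - | γ
      · rfl
      · exfalso
        have hfx := hfix (b i) (by rw [h]; rfl) ⟨_, hVab i hi⟩
        exact hbne i hi (hinj _ _ _ hfx (hVab i hi))
    have conn1 : Connects V (a 0) (b 0) := by
      refine ⟨1, fun i => if i = 0 then a 0 else b 0, le_rfl, by simp, by simp, ?_⟩
      intro i hi
      have hi0 : i = 0 := by omega
      subst hi0
      show b 0 ∈ flow V (a 0)
      simp only [flow, hVab 0 hn, if_neg (hbne 0 hn)]
      rfl
    have conn2 : Connects V (b 0) (a 0) := by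
      refine ⟨2 * n - 1, fun k => if k % 2 = 0 then b (k / 2) else a (k / 2 + 1),
        by omega, by norm_num, ?_, ?_⟩
      · simp only
        rw [if_neg (by omega : ¬ (2 * n - 1) % 2 = 0), show (2 * n - 1) / 2 + 1 = n by omega]
        exact hclose
      · intro i hi
        simp only
        by_cases hpar : i % 2 = 0
        · have ht : i / 2 < n := by omega
          rw [if_pos hpar, if_neg (by omega : ¬ (i + 1) % 2 = 0),
            show (i + 1) / 2 = i / 2 by omega]
          have hK1 : (a (i / 2)).Nonempty := (hK _ (hcof _ _ (hVab _ ht)).1).1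
          have hcd : (a (i / 2 + 1)).card = (a (i / 2)).card := (hstep _ ht).2.2.2.1
          simp only [flow, hbnone _ ht]
          refine ⟨?_, (hstep _ ht).2.2.1, ?_, ?_⟩
          · rw [← Finset.card_pos, hcd, Finset.card_pos]
            exact hK1
          · intro h
            have h1 := (hstep _ ht).2.1
            rw [← h, hcd] at h1
            omega
          · intro h
            exact (hstep _ ht).2.2.2.2 (hinj _ _ _ h (hVab _ ht))
        · have hs : i / 2 + 1 < n := by omega
          rw [if_neg hpar, if_pos (by omega : (i + 1) % 2 = 0),
            show (i + 1) / 2 = i / 2 + 1 by omega]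
          simp only [flow, hVab _ hs, if_neg (hbne _ hs)]
          rfl
    have := hF (a 0) (b 0) conn1 conn2
    have hc := (hstep 0 hn).2.1
    rw [← this] at hc
    omega
end

section
/- Let f = (f₁, ..., fₖ) : K → ℝᵏ be an mdm function such that each component fᵢ : K → ℝ is a discrete Morse function, with gradient vector fields V and Vᵢ respectively. Then dom V = {σ ∈ K : ⋂ᵢ Tᵢ(σ) = ∅}, and for σ ∈ dom V, V(σ) = β for a cofacet β ⊃ σ if and only if Vᵢ(σ) = β for every i = 1, ..., k; otherwise V(σ) = σ. -/
open Finset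

variable {α : Type*} [DecidableEq α]

/-- `H_f(σ)`: the cofacets `β ⊃ σ` with `f β ≼ f σ`. -/
def Hset {β : Type*} [Preorder β] (K : Finset (Finset α)) (f : Finset α → β)
    (σ : Finset α) : Set (Finset α) :=
  {τ | τ ∈ K ∧ σ ⊆ τ ∧ τ.card = σ.card + 1 ∧ f τ ≤ f σ}

/-- `T_f(σ)`: the facets `α ⊂ σ` with `f α ≽ f σ`. -/
def Tset {β : Type*} [Preorder β] (K : Finset (Finset α)) (f : Finset α → β)
    (σ : Finset α) : Set (Finset α) :=
  {τ | τ ∈ K ∧ τ ⊆ σ ∧ σ.card = τ.card + 1 ∧ f σ ≤ f τ}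

/-- `f` is a multidimensional discrete Morse function: `|H_f(σ)| ≤ 1`, `|T_f(σ)| ≤ 1`,
cofacets outside `H_f(σ)` have strictly larger value, and facets outside `T_f(σ)`
have strictly smaller value (in the partial order of the codomain). -/
def IsMdm {β : Type*} [Preorder β] (K : Finset (Finset α)) (f : Finset α → β) : Prop :=
  ∀ σ ∈ K,
    (Hset K f σ).Subsingleton ∧ (Tset K f σ).Subsingleton ∧
    (∀ τ ∈ K, σ ⊆ τ → τ.card = σ.card + 1 → τ ∉ Hset K f σ → f σ ≤ f τ ∧ f σ ≠ f τ) ∧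
    (∀ τ ∈ K, τ ⊆ σ → σ.card = τ.card + 1 → τ ∉ Tset K f σ → f τ ≤ f σ ∧ f τ ≠ f σ)

/-- `V` is the gradient vector field of `f`: `dom V = {σ : T_f(σ) = ∅}`, with
`V σ = σ` if `H_f(σ) = ∅` and `V σ = β` if `H_f(σ) = {β}`. -/
def IsGrad {β : Type*} [Preorder β] (K : Finset (Finset α)) (f : Finset α → β)
    (V : Finset α → Option (Finset α)) : Prop :=
  (∀ σ, σ ∉ K → V σ = none) ∧
  ∀ σ ∈ K,
    (Tset K f σ ≠ ∅ → V σ = none) ∧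
    (Tset K f σ = ∅ →
      (Hset K f σ = ∅ → V σ = some σ) ∧ ∀ τ, Hset K f σ = {τ} → V σ = some τ)

/-- `σ` is a critical simplex of `f`. -/
def IsCritical {β : Type*} [Preorder β] (K : Finset (Finset α)) (f : Finset α → β)
    (σ : Finset α) : Prop :=
  Hset K f σ = ∅ ∧ Tset K f σ = ∅

/-- `g : K → ℝ` is a discrete Morse function. -/
def IsDM (K : Finset (Finset α)) (g : Finset α → ℝ) : Prop :=
  ∀ σ ∈ K, (Hset K g σ).Subsingleton ∧ (Tset K g σ).Subsingleton

lemma Tset_iInter {k : ℕ} (hk : 0 < k) (K : Finset (Finset α)) (f : Finset α → Fin k → ℝ)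
    (σ : Finset α) : (⋂ i, Tset K (fun σ' => f σ' i) σ) = Tset K f σ := by
  ext τ
  simp only [Set.mem_iInter, Tset, Set.mem_setOf_eq, Pi.le_def]
  constructor
  · intro h
    obtain ⟨i0⟩ := Fin.pos_iff_nonempty.mp hk
    exact ⟨(h i0).1, (h i0).2.1, (h i0).2.2.1, fun i => (h i).2.2.2⟩
  · intro h i
    exact ⟨h.1, h.2.1, h.2.2.1, h.2.2.2 i⟩

lemma key_lemma {k : ℕ} (K : Finset (Finset α))
    (f : Finset α → Fin k → ℝ)
    (W : Fin k → Finset α → Option (Finset α))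
    (hK : IsComplex K) (hf : IsMdm K f)
    (hfi : ∀ i, IsDM K (fun σ => f σ i))
    (hW : ∀ i, IsGrad K (fun σ => f σ i) (W i))
    (σ τ : Finset α) (hσ : σ ∈ K) (hT : Tset K f σ = ∅)
    (hτ : τ ∈ Hset K f σ) : ∀ i, W i σ = some τ := by
  obtain ⟨hτK, hsub, hcard, hle⟩ := hτ
  intro i
  have hTi : Tset K (fun σ' => f σ' i) σ = ∅ := by
    by_contra h
    obtain ⟨τ', hτ'⟩ := Set.nonempty_iff_ne_empty.mpr h
    obtain ⟨hτ'K, hsub', hcard', hle'⟩ := hτ'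
    have hnotin : τ' ∉ Tset K f σ := by rw [hT]; exact Set.notMem_empty _
    have hdown := ((hf σ hσ).2.2.2 τ' hτ'K hsub' hcard' hnotin).1
    have heq : f τ' i = f σ i := le_antisymm (hdown i) hle'
    have hvcard : (τ \ σ).card = 1 := by
      rw [Finset.card_sdiff_of_subset hsub, hcard]; omega
    obtain ⟨v, hv⟩ := Finset.card_eq_one.mp hvcard
    have hvτ : v ∈ τ := (Finset.mem_sdiff.mp (hv ▸ Finset.mem_singleton_self v)).1
    have hvσ : v ∉ σ := (Finset.mem_sdiff.mp (hv ▸ Finset.mem_singleton_self v)).2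
    set σ' := insert v τ' with hσ'def
    have hvτ' : v ∉ τ' := fun h' => hvσ (hsub' h')
    have hσ'sub : σ' ⊆ τ := Finset.insert_subset hvτ (hsub'.trans hsub)
    have hσ'K : σ' ∈ K := (hK τ hτK).2 σ' hσ'sub ⟨v, Finset.mem_insert_self v τ'⟩
    have hσ'card : σ'.card = τ'.card + 1 := Finset.card_insert_of_notMem hvτ'
    have hne : σ' ≠ σ := fun h' => hvσ (h' ▸ Finset.mem_insert_self v τ')
    have hHsub := (hfi i τ' hτ'K).1
    have hσH : σ ∈ Hset K (fun σ'' => f σ'' i) τ' := ⟨hσ, hsub', hcard', le_of_eq heq.symm⟩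
    have hσ'notH : f τ' i < f σ' i := by
      by_contra h'
      push_neg at h'
      exact hne (hHsub ⟨hσ'K, Finset.subset_insert v τ', hσ'card, h'⟩ hσH)
    have hTsub := (hfi i τ hτK).2
    have h1 : σ ∈ Tset K (fun σ'' => f σ'' i) τ := ⟨hσ, hsub, hcard, hle i⟩
    have h2 : σ' ∈ Tset K (fun σ'' => f σ'' i) τ := by
      refine ⟨hσ'K, hσ'sub, by omega, ?_⟩
      have : f σ i < f σ' i := heq ▸ hσ'notH
      exact le_of_lt (lt_of_le_of_lt (hle i) this)
    exact hne (hTsub h2 h1)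
  have hτHi : τ ∈ Hset K (fun σ' => f σ' i) σ := ⟨hτK, hsub, hcard, hle i⟩
  have hHeq : Hset K (fun σ' => f σ' i) σ = {τ} :=
    Set.eq_singleton_iff_unique_mem.mpr ⟨hτHi, fun x hx => (hfi i σ hσ).1 hx hτHi⟩
  exact (((hW i).2 σ hσ).2 hTi).2 τ hHeq

/-- If `f = (f₁,...,fₖ)` is mdm and each component `fᵢ` is discrete Morse, with
gradients `V` and `Wᵢ` respectively, then `dom V = {σ : ⋂ᵢ Tᵢ(σ) = ∅}`, and for
`σ ∈ dom V`: `V σ` is a cofacet `β` iff `Wᵢ σ = β` for every `i`, and otherwise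
`V σ = σ`. -/
theorem stmt5 {k : ℕ} (hk : 0 < k) (K : Finset (Finset α))
    (f : Finset α → Fin k → ℝ) (V : Finset α → Option (Finset α))
    (W : Fin k → Finset α → Option (Finset α))
    (hK : IsComplex K) (hf : IsMdm K f)
    (hfi : ∀ i, IsDM K (fun σ => f σ i))
    (hV : IsGrad K f V) (hW : ∀ i, IsGrad K (fun σ => f σ i) (W i)) :
    (∀ σ ∈ K, ((V σ).isSome = true ↔ (⋂ i, Tset K (fun σ' => f σ' i) σ) = ∅)) ∧
    ∀ σ ∈ K, (V σ).isSome = true →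
      (∀ τ, σ ⊆ τ → τ.card = σ.card + 1 → (V σ = some τ ↔ ∀ i, W i σ = some τ)) ∧
      ((¬ ∃ τ, σ ⊆ τ ∧ τ.card = σ.card + 1 ∧ ∀ i, W i σ = some τ) → V σ = some σ) := by
  have hsome : ∀ σ ∈ K, (V σ).isSome = true → Tset K f σ = ∅ := by
    intro σ hσ hs
    by_contra hTne
    rw [(hV.2 σ hσ).1 hTne] at hs
    simp at hs
  have hVs : ∀ σ ∈ K, Tset K f σ = ∅ → (V σ).isSome = true := by
    intro σ hσ hT
    rcases (hf σ hσ).1.eq_empty_or_singleton with hH | ⟨ρ, hH⟩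
    · rw [(((hV.2 σ hσ).2 hT).1 hH)]; rfl
    · rw [(((hV.2 σ hσ).2 hT).2 ρ hH)]; rfl
  constructor
  · intro σ hσ
    rw [Tset_iInter hk]
    exact ⟨hsome σ hσ, hVs σ hσ⟩
  · intro σ hσ hs
    have hT : Tset K f σ = ∅ := hsome σ hσ hs
    have fwd : ∀ τ, τ ∈ Hset K f σ → V σ = some τ ∧ ∀ i, W i σ = some τ := by
      intro τ hτ
      have hHeq : Hset K f σ = {τ} :=
        Set.eq_singleton_iff_unique_mem.mpr ⟨hτ, fun x hx => (hf σ hσ).1 hx hτ⟩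
      exact ⟨((hV.2 σ hσ).2 hT).2 τ hHeq,
        key_lemma K f W hK hf hfi hW σ τ hσ hT hτ⟩
    constructor
    · intro τ hsub hcard
      have hτσ : τ ≠ σ := by
        intro h'; rw [h'] at hcard; omega
      constructor
      · intro hVτ
        rcases (hf σ hσ).1.eq_empty_or_singleton with hH | ⟨ρ, hH⟩
        · have := ((hV.2 σ hσ).2 hT).1 hH
          rw [this] at hVτ
          exact absurd (Option.some.inj hVτ).symm hτσ
        · have hρ : ρ ∈ Hset K f σ := hH ▸ rfl
          have := (fwd ρ hρ).1
          rw [this] at hVτ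
          obtain rfl := Option.some.inj hVτ
          exact (fwd ρ hρ).2
      · intro hWi
        have hτH : τ ∈ Hset K f σ := by
          have hmem : ∀ i, τ ∈ Hset K (fun σ' => f σ' i) σ := by
            intro i
            have hwi := hWi i
            have hTi : Tset K (fun σ' => f σ' i) σ = ∅ := by
              by_contra hTne
              rw [((hW i).2 σ hσ).1 hTne] at hwi
              cases hwi
            rcases (hfi i σ hσ).1.eq_empty_or_singleton with hH | ⟨ρ, hH⟩
            · have := (((hW i).2 σ hσ).2 hTi).1 hH
              rw [this] at hwi
              exact absurd (Option.some.inj hwi).symm hτσ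
            · have := (((hW i).2 σ hσ).2 hTi).2 ρ hH
              rw [this] at hwi
              obtain rfl := Option.some.inj hwi
              exact hH ▸ rfl
          obtain ⟨i0⟩ := Fin.pos_iff_nonempty.mp hk
          exact ⟨(hmem i0).1, hsub, hcard, fun i => (hmem i).2.2.2⟩
        exact (fwd τ hτH).1
    · intro hnone
      rcases (hf σ hσ).1.eq_empty_or_singleton with hH | ⟨ρ, hH⟩
      · exact ((hV.2 σ hσ).2 hT).1 hH
      · exfalso
        have hρ : ρ ∈ Hset K f σ := hH ▸ rfl
        exact hnone ⟨ρ, hρ.2.1, hρ.2.2.1, (fwd ρ hρ).2⟩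
end

section
/- Let f₁, ..., fₖ : K → ℝ be discrete Morse functions with identical gradient vector fields V₁ = V₂ = ⋯ = Vₖ =: V. Then f = (f₁, ..., fₖ) : K → ℝᵏ is a multidimensional discrete Morse function and its gradient vector field is V. -/
open Finset

variable {α : Type*} [DecidableEq α]

/-- Exclusivity: for a real discrete Morse function, `H(σ)` and `T(σ)` cannot both
be nonempty. -/
lemma excl_aux {K : Finset (Finset α)} {g : Finset α → ℝ} (hK : IsComplex K)
    (hdm : IsDM K g) {σ : Finset α} (hσ : σ ∈ K)
    (hH : (Hset K g σ).Nonempty) (hT : (Tset K g σ).Nonempty) : False := by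
  obtain ⟨b, hbK, hσb, hbc, hgb⟩ := hH
  obtain ⟨a, haK, haσ, hac, hga⟩ := hT
  have hcard : (b \ σ).card = 1 := by
    rw [card_sdiff_of_subset hσb]; omega
  obtain ⟨x, hx⟩ := Finset.card_eq_one.mp hcard
  have hxb : x ∈ b := (mem_sdiff.mp (hx ▸ mem_singleton_self x)).1
  have hxσ : x ∉ σ := (mem_sdiff.mp (hx ▸ mem_singleton_self x)).2
  have hxa : x ∉ a := fun h => hxσ (haσ h)
  have hσ'c : (insert x a).card = a.card + 1 := card_insert_of_notMem hxa
  have hσ'b : insert x a ⊆ b := insert_subset hxb (haσ.trans hσb)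
  have hσ'K : insert x a ∈ K := (hK b hbK).2 (insert x a) hσ'b (insert_nonempty _ _)
  have hne : insert x a ≠ σ := fun h => hxσ (h ▸ mem_insert_self x a)
  by_cases hle : g (insert x a) ≤ g a
  · exact hne ((hdm a haK).1 ⟨hσ'K, subset_insert x a, hσ'c, hle⟩ ⟨hσ, haσ, hac, hga⟩)
  · push_neg at hle
    have h1 : insert x a ∈ Tset K g b :=
      ⟨hσ'K, hσ'b, by omega, le_of_lt (lt_of_le_of_lt (hgb.trans hga) hle)⟩
    have h2 : σ ∈ Tset K g b := ⟨hσ, hσb, hbc, hgb⟩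
    exact hne ((hdm b hbK).2 h1 h2)

lemma Hset_iff {K : Finset (Finset α)} {g : Finset α → ℝ} {W : Finset α → Option (Finset α)}
    (hK : IsComplex K) (hdm : IsDM K g) (hgr : IsGrad K g W)
    {σ : Finset α} (hσ : σ ∈ K) (τ : Finset α) :
    τ ∈ Hset K g σ ↔ (W σ = some τ ∧ τ ≠ σ) := by
  constructor
  · intro hτ
    have hne : τ ≠ σ := by
      rintro rfl
      have := hτ.2.2.1
      omega
    have hT : Tset K g σ = ∅ := by
      rw [← Set.not_nonempty_iff_eq_empty]
      exact fun h => excl_aux hK hdm hσ ⟨τ, hτ⟩ h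
    have hHs : Hset K g σ = {τ} := ((hdm σ hσ).1).eq_singleton_of_mem hτ
    exact ⟨((hgr.2 σ hσ).2 hT).2 τ hHs, hne⟩
  · rintro ⟨hW, hne⟩
    have hT : Tset K g σ = ∅ := by
      by_contra h
      rw [(hgr.2 σ hσ).1 h] at hW
      cases hW
    rcases Set.eq_empty_or_nonempty (Hset K g σ) with hH | ⟨τ', hτ'⟩
    · rw [((hgr.2 σ hσ).2 hT).1 hH] at hW
      exact absurd (Option.some_injective _ hW) hne.symm
    · have hHs : Hset K g σ = {τ'} := ((hdm σ hσ).1).eq_singleton_of_mem hτ'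
      have hW' := ((hgr.2 σ hσ).2 hT).2 τ' hHs
      rw [hW'] at hW
      rwa [Option.some_injective _ hW] at hτ'

lemma Tset_iff {K : Finset (Finset α)} {g : Finset α → ℝ} {W : Finset α → Option (Finset α)}
    (hK : IsComplex K) (hdm : IsDM K g) (hgr : IsGrad K g W)
    {σ : Finset α} (hσ : σ ∈ K) (τ : Finset α) :
    τ ∈ Tset K g σ ↔ (τ ∈ K ∧ W τ = some σ ∧ σ ≠ τ) := by
  constructor
  · rintro ⟨hτK, hsub, hcard, hle⟩
    exact ⟨hτK, (Hset_iff hK hdm hgr hτK σ).mp ⟨hσ, hsub, hcard, hle⟩⟩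
  · rintro ⟨hτK, hW, hne⟩
    have h := (Hset_iff hK hdm hgr hτK σ).mpr ⟨hW, hne⟩
    exact ⟨hτK, h.2.1, h.2.2.1, h.2.2.2⟩

/-- If `f₁,...,fₖ` are discrete Morse functions with identical gradient vector fields
`W`, then `f = (f₁,...,fₖ)` is mdm and its gradient is `W`. -/
theorem stmt6 {k : ℕ} (hk : 0 < k) (K : Finset (Finset α))
    (f : Finset α → Fin k → ℝ) (W : Finset α → Option (Finset α))
    (hK : IsComplex K)
    (hdm : ∀ i, IsDM K (fun σ => f σ i))
    (hgrad : ∀ i, IsGrad K (fun σ => f σ i) W) :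
    IsMdm K f ∧ IsGrad K f W := by
  have i0 : Fin k := ⟨0, hk⟩
  have hHiff : ∀ (i : Fin k), ∀ σ ∈ K, ∀ τ,
      τ ∈ Hset K (fun σ => f σ i) σ ↔ (W σ = some τ ∧ τ ≠ σ) :=
    fun i σ hσ τ => Hset_iff hK (hdm i) (hgrad i) hσ τ
  have hTiff : ∀ (i : Fin k), ∀ σ ∈ K, ∀ τ,
      τ ∈ Tset K (fun σ => f σ i) σ ↔ (τ ∈ K ∧ W τ = some σ ∧ σ ≠ τ) :=
    fun i σ hσ τ => Tset_iff hK (hdm i) (hgrad i) hσ τ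
  have hHeq : ∀ σ ∈ K, Hset K f σ = Hset K (fun σ => f σ i0) σ := by
    intro σ hσ
    ext τ
    constructor
    · rintro ⟨h1, h2, h3, h4⟩
      exact ⟨h1, h2, h3, h4 i0⟩
    · rintro ⟨h1, h2, h3, h4⟩
      refine ⟨h1, h2, h3, fun i => ?_⟩
      have hm := (hHiff i σ hσ τ).mpr ((hHiff i0 σ hσ τ).mp ⟨h1, h2, h3, h4⟩)
      exact hm.2.2.2
  have hTeq : ∀ σ ∈ K, Tset K f σ = Tset K (fun σ => f σ i0) σ := by
    intro σ hσ
    ext τ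
    constructor
    · rintro ⟨h1, h2, h3, h4⟩
      exact ⟨h1, h2, h3, h4 i0⟩
    · rintro ⟨h1, h2, h3, h4⟩
      refine ⟨h1, h2, h3, fun i => ?_⟩
      have hm := (hTiff i σ hσ τ).mpr ((hTiff i0 σ hσ τ).mp ⟨h1, h2, h3, h4⟩)
      exact hm.2.2.2
  constructor
  · intro σ hσ
    refine ⟨?_, ?_, ?_, ?_⟩
    · rw [hHeq σ hσ]; exact ((hdm i0) σ hσ).1
    · rw [hTeq σ hσ]; exact ((hdm i0) σ hσ).2
    · intro τ hτK hsub hcard hnot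
      rw [hHeq σ hσ] at hnot
      have hall : ∀ i, f σ i < f τ i := by
        intro i
        have hni : τ ∉ Hset K (fun σ => f σ i) σ := fun hmem =>
          hnot ((hHiff i0 σ hσ τ).mpr ((hHiff i σ hσ τ).mp hmem))
        by_contra h
        push_neg at h
        exact hni ⟨hτK, hsub, hcard, h⟩
      exact ⟨fun i => (hall i).le, fun h => absurd (congrFun h i0) (hall i0).ne⟩
    · intro τ hτK hsub hcard hnot
      rw [hTeq σ hσ] at hnot
      have hall : ∀ i, f τ i < f σ i := by
        intro i
        have hni : τ ∉ Tset K (fun σ => f σ i) σ := fun hmem =>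
          hnot ((hTiff i0 σ hσ τ).mpr ((hTiff i σ hσ τ).mp hmem))
        by_contra h
        push_neg at h
        exact hni ⟨hτK, hsub, hcard, h⟩
      exact ⟨fun i => (hall i).le, fun h => absurd (congrFun h i0) (hall i0).ne⟩
  · refine ⟨(hgrad i0).1, fun σ hσ => ?_⟩
    rw [hHeq σ hσ, hTeq σ hσ]
    exact (hgrad i0).2 σ hσ
end

section
/- A discrete vector field V on a simplicial complex K is acyclic if and only if V is the gradient vector field of some multidimensional discrete Morse function f : K → ℝᵏ. -/
open Finset

variable {α : Type*} [DecidableEq α]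

namespace Stmt7Aux

variable {α : Type*} [DecidableEq α]

/-- The top of the pair containing `σ`. -/
def mtop (V : Finset α → Option (Finset α)) (σ : Finset α) : Finset α := (V σ).getD σ

/-- Auxiliary relation on tops: `x` strictly precedes `y`. -/
def rel (K : Finset (Finset α)) (V : Finset α → Option (Finset α)) (x y : Finset α) : Prop :=
  ∃ a b, a ∈ K ∧ b ∈ K ∧ a ⊆ b ∧ b.card = a.card + 1 ∧ V a ≠ some b ∧
    mtop V a = x ∧ mtop V b = y

theorem mtop_cases {K : Finset (Finset α)} {V : Finset α → Option (Finset α)}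
    (hV : IsDVF K V) (a : Finset α) :
    mtop V a = a ∨ (V a = some (mtop V a) ∧ a ⊆ mtop V a ∧ (mtop V a).card = a.card + 1) := by
  cases h : V a with
  | none => left; simp [mtop, h]
  | some τ =>
    simp only [mtop, h, Option.getD_some]
    rcases (hV.1 a τ h).2.2 with h1 | h1
    · left; exact h1
    · right; exact ⟨trivial, h1.1, h1.2⟩

theorem mtop_mem {K : Finset (Finset α)} {V : Finset α → Option (Finset α)}
    (hV : IsDVF K V) {a : Finset α} (ha : a ∈ K) : mtop V a ∈ K := by
  unfold mtop
  cases h : V a with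
  | none => exact ha
  | some τ => exact (hV.1 a τ h).2.1

theorem vb_none {K : Finset (Finset α)} {V : Finset α → Option (Finset α)}
    (hV : IsDVF K V) {a b : Finset α} (h : V a = some b) (hne : a ≠ b) : V b = none := by
  cases hb : V b with
  | none => rfl
  | some c =>
    have hbb : V b = some b := hV.2.2.2.1 b (by rw [hb]; rfl) ⟨a, h⟩
    exact absurd (hV.2.1 a b b h hbb) hne

theorem mtop_pair {K : Finset (Finset α)} {V : Finset α → Option (Finset α)}
    (hV : IsDVF K V) {a b : Finset α} (h : V a = some b) (hne : a ≠ b) :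
    mtop V a = b ∧ mtop V b = b := by
  constructor
  · unfold mtop; rw [h]; rfl
  · unfold mtop; rw [vb_none hV h hne]; rfl

theorem transGen_chain {β : Type*} {r : β → β → Prop} {x y : β} (h : Relation.TransGen r x y) :
    ∃ (n : ℕ) (ρ : ℕ → β), 1 ≤ n ∧ ρ 0 = x ∧ ρ n = y ∧ ∀ i < n, r (ρ i) (ρ (i + 1)) := by
  induction h with
  | @single c h =>
    refine ⟨1, fun i => if i = 0 then x else c, le_refl 1, by simp, by simp, ?_⟩
    intro i hi
    interval_cases i
    simpa using h
  | @tail c d _ hby ih =>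
    obtain ⟨n, ρ, hn, h0, hnb, hstep⟩ := ih
    refine ⟨n + 1, fun i => if i < n + 1 then ρ i else d,
      le_trans hn (Nat.le_succ n), by simp [h0], by simp, ?_⟩
    intro i hi
    rcases Nat.lt_or_ge i n with h' | h'
    · simp only [if_pos (Nat.lt_succ_of_lt h'), if_pos (Nat.succ_lt_succ h')]
      exact hstep i h'
    · have hin : i = n := Nat.le_antisymm (Nat.lt_succ_iff.mp hi) h'
      subst hin
      simp only [if_pos (Nat.lt_succ_self i), if_neg (lt_irrefl (i + 1))]
      rw [hnb]; exact hby

theorem rel_card {K : Finset (Finset α)} {V : Finset α → Option (Finset α)}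
    (hV : IsDVF K V) {x y : Finset α} (h : rel K V x y) :
    x.card ≤ y.card ∧ (x.card = y.card →
      ∃ a, a ∈ K ∧ V a = some x ∧ a ⊆ y ∧ x.card = a.card + 1 ∧ V a ≠ some y) := by
  obtain ⟨a, b, haK, hbK, hab, hcard, hnm, hma, hmb⟩ := h
  have hxa : x.card = a.card ∨ (V a = some x ∧ a ⊆ x ∧ x.card = a.card + 1) := by
    rcases mtop_cases hV a with h1 | h1
    · left; rw [hma] at h1; rw [h1]
    · right; rw [hma] at h1; exact h1
  have hyb : y = b ∨ (b ⊆ y ∧ y.card = b.card + 1) := by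
    rcases mtop_cases hV b with h1 | h1
    · left; rw [hmb] at h1; rw [h1]
    · right; rw [hmb] at h1; exact ⟨h1.2.1, h1.2.2⟩
  have hxle : x.card ≤ a.card + 1 := by rcases hxa with h1 | h1 <;> omega
  have hyge : b.card ≤ y.card := by
    rcases hyb with h1 | h1
    · rw [h1]
    · omega
  constructor
  · omega
  · intro hxy
    have hxc : x.card = a.card + 1 := by omega
    have hyc : y.card = b.card := by omega
    have hyb' : y = b := by
      rcases hyb with h1 | h1
      · exact h1
      · omega
    rcases hxa with h1 | h1
    · omega
    · subst hyb'
      exact ⟨a, haK, h1.1, hab, hxc, hnm⟩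

end Stmt7Aux
namespace Stmt7Aux

theorem rel_acyclic {α : Type*} [DecidableEq α] {K : Finset (Finset α)}
    {V : Finset α → Option (Finset α)} (hV : IsDVF K V) (hac : AcyclicVF V) :
    ∀ x, ¬ Relation.TransGen (rel K V) x x := by
  intro x hx
  obtain ⟨n, ρ, hn, h0, hn', hstep⟩ := transGen_chain hx
  -- cards are nondecreasing along the chain
  have hle : ∀ i < n, (ρ i).card ≤ (ρ (i + 1)).card := fun i hi =>
    (rel_card hV (hstep i hi)).1
  have hmono : ∀ j ≤ n, (ρ 0).card ≤ (ρ j).card ∧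
      ∀ i ≤ j, (ρ i).card ≤ (ρ j).card := by
    intro j
    induction j with
    | zero => exact fun _ => ⟨le_refl _, fun i hi => by simp [Nat.le_zero.mp hi]⟩
    | succ j ih =>
      intro hj
      obtain ⟨hA, hB⟩ := ih (by omega)
      have hstepj := hle j (by omega)
      refine ⟨hA.trans hstepj, fun i hi => ?_⟩
      rcases Nat.lt_or_ge i (j + 1) with h' | h'
      · exact (hB i (by omega)).trans hstepj
      · have : i = j + 1 := by omega
        rw [this]
  have hcardeq : ∀ i ≤ n, (ρ i).card = (ρ 0).card := by
    intro i hi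
    have h1 := (hmono n le_rfl).2 i hi
    have h2 := (hmono i hi).1
    have h3 : (ρ n).card = (ρ 0).card := by rw [hn', h0]
    omega
  -- each step is an "up then down" step
  have hex : ∀ i : ℕ, ∃ a : Finset α, i < n →
      a ∈ K ∧ V a = some (ρ i) ∧ a ⊆ ρ (i + 1) ∧ (ρ i).card = a.card + 1 ∧
        V a ≠ some (ρ (i + 1)) := by
    intro i
    rcases Nat.lt_or_ge i n with hi | hi
    · have hc : (ρ i).card = (ρ (i + 1)).card := by
        rw [hcardeq i (by omega), hcardeq (i + 1) (by omega)]
      obtain ⟨a, ha⟩ := (rel_card hV (hstep i hi)).2 hc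
      exact ⟨a, fun _ => ha⟩
    · exact ⟨∅, fun h => absurd h (by omega)⟩
  choose a ha using hex
  apply hac
  refine ⟨n, fun j => a (n - 1 - j % n), fun j => ρ (n - 1 - j % n), hn, ?_, ?_⟩
  · intro j hj
    have hjm : j % n = j := Nat.mod_eq_of_lt hj
    simp only [hjm]
    set k := n - 1 - j with hk
    have hkn : k < n := by omega
    obtain ⟨hK1, hV1, hsub1, hc1, hnm1⟩ := ha k hkn
    have hcards : ∀ i, i < n → (a i).card + 1 = (ρ 0).card := by
      intro i hi
      have := (ha i hi).2.2.2.1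
      have := hcardeq i (le_of_lt hi)
      omega
    refine ⟨hV1, by omega, ?_, ?_, ?_⟩
    · -- a (n - 1 - (j+1) % n) ⊆ ρ k
      rcases Nat.lt_or_ge (j + 1) n with hj1 | hj1
      · have h1 : (j + 1) % n = j + 1 := Nat.mod_eq_of_lt hj1
        have h2 : n - 1 - (j + 1) % n = k - 1 := by omega
        rw [h2]
        have hk1 : k - 1 < n := by omega
        have := (ha (k - 1) hk1).2.2.1
        have h3 : k - 1 + 1 = k := by omega
        rwa [h3] at this
      · have hjn : j + 1 = n := by omega
        have h1 : (j + 1) % n = 0 := by rw [hjn, Nat.mod_self]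
        have h2 : n - 1 - (j + 1) % n = n - 1 := by omega
        rw [h2]
        have hk0 : k = 0 := by omega
        have := (ha (n - 1) (by omega)).2.2.1
        have h3 : n - 1 + 1 = n := by omega
        rw [h3, hn', ← h0] at this
        rw [hk0]
        exact this
    · -- cards equal
      have hmlt : (j + 1) % n < n := Nat.mod_lt _ (by omega)
      have i1 : n - 1 - (j + 1) % n < n := by omega
      have e1 := hcards _ i1
      have e2 := hcards k hkn
      omega
    · -- distinct
      intro heq
      rcases Nat.lt_or_ge (j + 1) n with hj1 | hj1
      · have h1 : (j + 1) % n = j + 1 := Nat.mod_eq_of_lt hj1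
        have h2 : n - 1 - (j + 1) % n = k - 1 := by omega
        rw [h2] at heq
        have hk1 : k - 1 < n := by omega
        have hnm2 := (ha (k - 1) hk1).2.2.2.2
        have h3 : k - 1 + 1 = k := by omega
        rw [h3] at hnm2
        apply hnm2
        rw [heq, hV1]
      · have hjn : j + 1 = n := by omega
        have h1 : (j + 1) % n = 0 := by rw [hjn, Nat.mod_self]
        have h2 : n - 1 - (j + 1) % n = n - 1 := by omega
        rw [h2] at heq
        have hk0 : k = 0 := by omega
        rw [hk0] at heq hV1
        have hnm2 := (ha (n - 1) (by omega)).2.2.2.2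
        have h3 : n - 1 + 1 = n := by omega
        rw [h3] at hnm2
        apply hnm2
        rw [heq, hV1, hn', ← h0]
  · simp [Nat.mod_self]

end Stmt7Aux
open Stmt7Aux

/-- A discrete vector field `V` on `K` is acyclic iff it is the gradient vector field
of some multidimensional discrete Morse function `f : K → ℝᵏ`. -/
theorem stmt7 (K : Finset (Finset α)) (V : Finset α → Option (Finset α))
    (hK : IsComplex K) (hV : IsDVF K V) :
    AcyclicVF V ↔
      ∃ (k : ℕ) (f : Finset α → Fin k → ℝ), IsMdm K f ∧ IsGrad K f V := by
  constructor
  · intro hac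
    classical
    set N : Finset α → ℕ := fun σ =>
      (K.filter (fun w => Relation.TransGen (rel K V) w (mtop V σ))).card with hN
    have key1 : ∀ a b, V a = some b → b.card = a.card + 1 → N a = N b := by
      intro a b h hc
      have hne : a ≠ b := by intro he; rw [he] at hc; omega
      obtain ⟨p1, p2⟩ := mtop_pair hV h hne
      simp only [hN, p1, p2]
    have key2 : ∀ a b, a ∈ K → b ∈ K → a ⊆ b → b.card = a.card + 1 →
        V a ≠ some b → N a < N b := by
      intro a b haK hbK hab hc hnm
      have hr : rel K V (mtop V a) (mtop V b) := ⟨a, b, haK, hbK, hab, hc, hnm, rfl, rfl⟩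
      have hsubset : K.filter (fun w => Relation.TransGen (rel K V) w (mtop V a)) ⊆
          K.filter (fun w => Relation.TransGen (rel K V) w (mtop V b)) := by
        intro w hw
        rw [Finset.mem_filter] at hw ⊢
        exact ⟨hw.1, hw.2.tail hr⟩
      simp only [hN]
      apply Finset.card_lt_card
      rw [Finset.ssubset_iff_of_subset hsubset]
      refine ⟨mtop V a, Finset.mem_filter.mpr ⟨mtop_mem hV haK, Relation.TransGen.single hr⟩,
        fun hmem => rel_acyclic hV hac _ (Finset.mem_filter.mp hmem).2⟩
    have hmono : ∀ a b, a ∈ K → b ∈ K → a ⊆ b → b.card = a.card + 1 → N a ≤ N b := by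
      intro a b haK hbK hab hc
      by_cases h : V a = some b
      · exact (key1 a b h hc).le
      · exact (key2 a b haK hbK hab hc h).le
    refine ⟨1, fun σ _ => (N σ : ℝ), ?_, ?_⟩
    · -- IsMdm
      have hfle : ∀ σ τ : Finset α, N σ ≤ N τ →
          (fun _ : Fin 1 => (N σ : ℝ)) ≤ (fun _ : Fin 1 => (N τ : ℝ)) := by
        intro σ τ h i
        show (N σ : ℝ) ≤ (N τ : ℝ)
        exact_mod_cast h
      have hfeq' : ∀ σ τ : Finset α,
          (fun _ : Fin 1 => (N σ : ℝ)) = (fun _ : Fin 1 => (N τ : ℝ)) → N σ = N τ := by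
        intro σ τ h
        have h0 : (N σ : ℝ) = (N τ : ℝ) := congrFun h 0
        exact_mod_cast h0
      have hfle' : ∀ σ τ : Finset α,
          (fun _ : Fin 1 => (N σ : ℝ)) ≤ (fun _ : Fin 1 => (N τ : ℝ)) → N σ ≤ N τ := by
        intro σ τ h
        have h0 : (N σ : ℝ) ≤ (N τ : ℝ) := h 0
        exact_mod_cast h0
      intro σ hσ
      refine ⟨?_, ?_, ?_, ?_⟩
      · intro τ₁ h₁ τ₂ h₂
        obtain ⟨hK₁, hs₁, hc₁, hf₁⟩ := h₁
        obtain ⟨hK₂, hs₂, hc₂, hf₂⟩ := h₂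
        have e₁ : V σ = some τ₁ := by
          by_contra hne
          have h1 := key2 σ τ₁ hσ hK₁ hs₁ hc₁ hne
          have h2 := hfle' τ₁ σ hf₁
          omega
        have e₂ : V σ = some τ₂ := by
          by_contra hne
          have h1 := key2 σ τ₂ hσ hK₂ hs₂ hc₂ hne
          have h2 := hfle' τ₂ σ hf₂
          omega
        rw [e₁] at e₂
        exact Option.some.inj e₂
      · intro τ₁ h₁ τ₂ h₂
        obtain ⟨hK₁, hs₁, hc₁, hf₁⟩ := h₁
        obtain ⟨hK₂, hs₂, hc₂, hf₂⟩ := h₂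
        have e₁ : V τ₁ = some σ := by
          by_contra hne
          have h1 := key2 τ₁ σ hK₁ hσ hs₁ hc₁ hne
          have h2 := hfle' σ τ₁ hf₁
          omega
        have e₂ : V τ₂ = some σ := by
          by_contra hne
          have h1 := key2 τ₂ σ hK₂ hσ hs₂ hc₂ hne
          have h2 := hfle' σ τ₂ hf₂
          omega
        exact hV.2.1 τ₁ τ₂ σ e₁ e₂
      · intro τ hτK hsub hc hnot
        have hle : N σ ≤ N τ := hmono σ τ hσ hτK hsub hc
        have hne : N σ ≠ N τ := by
          intro he
          exact hnot ⟨hτK, hsub, hc, hfle τ σ he.ge⟩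
        exact ⟨hfle σ τ hle, fun h => hne (hfeq' σ τ h)⟩
      · intro τ hτK hsub hc hnot
        have hle : N τ ≤ N σ := hmono τ σ hτK hσ hsub hc
        have hne : N τ ≠ N σ := by
          intro he
          exact hnot ⟨hτK, hsub, hc, hfle σ τ he.ge⟩
        exact ⟨hfle τ σ hle, fun h => hne (hfeq' τ σ h)⟩
    · -- IsGrad
      have hfle : ∀ σ τ : Finset α, N σ ≤ N τ →
          (fun _ : Fin 1 => (N σ : ℝ)) ≤ (fun _ : Fin 1 => (N τ : ℝ)) := by
        intro σ τ h i
        show (N σ : ℝ) ≤ (N τ : ℝ)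
        exact_mod_cast h
      have hfle' : ∀ σ τ : Finset α,
          (fun _ : Fin 1 => (N σ : ℝ)) ≤ (fun _ : Fin 1 => (N τ : ℝ)) → N σ ≤ N τ := by
        intro σ τ h
        have h0 : (N σ : ℝ) ≤ (N τ : ℝ) := h 0
        exact_mod_cast h0
      refine ⟨hV.2.2.2.2, ?_⟩
      intro σ hσ
      constructor
      · intro hT
        obtain ⟨τ, hτ⟩ := Set.nonempty_iff_ne_empty.mpr hT
        obtain ⟨hτK, hsub, hc, hf⟩ := hτ
        have e : V τ = some σ := by
          by_contra hne
          have h1 := key2 τ σ hτK hσ hsub hc hne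
          have h2 := hfle' σ τ hf
          omega
        have hne : τ ≠ σ := by intro h; rw [h] at hc; omega
        exact vb_none hV e hne
      · intro hT
        constructor
        · intro hH
          cases hVσ : V σ with
          | some ζ =>
            rcases (hV.1 σ ζ hVσ).2.2 with h1 | h1
            · rw [h1]
            · exfalso
              have hζK := (hV.1 σ ζ hVσ).2.1
              have hmem : ζ ∈ Hset K (fun σ (_ : Fin 1) => (N σ : ℝ)) σ :=
                ⟨hζK, h1.1, h1.2, hfle ζ σ (key1 σ ζ hVσ h1.2).ge⟩
              rw [hH] at hmem
              exact hmem
          | none =>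
            exfalso
            rcases hV.2.2.1 σ hσ with h1 | h1
            · rw [hVσ] at h1; simp at h1
            · obtain ⟨τ, hτ⟩ := h1
              rcases (hV.1 τ σ hτ).2.2 with h2 | h2
              · subst h2
                rw [hVσ] at hτ
                cases hτ
              · have hτK := (hV.1 τ σ hτ).1
                have hmem : τ ∈ Tset K (fun σ (_ : Fin 1) => (N σ : ℝ)) σ :=
                  ⟨hτK, h2.1, h2.2, hfle σ τ (key1 τ σ hτ h2.2).ge⟩
                rw [hT] at hmem
                exact hmem
        · intro τ hHτ
          have hmem : τ ∈ Hset K (fun σ (_ : Fin 1) => (N σ : ℝ)) σ := by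
            rw [hHτ]; exact Set.mem_singleton τ
          obtain ⟨hτK, hsub, hc, hf⟩ := hmem
          by_contra hne
          have h1 := key2 σ τ hσ hτK hsub hc hne
          have h2 := hfle' τ σ hf
          omega
  · rintro ⟨k, f, hmdm, hgrad⟩
    intro hcyc
    obtain ⟨n, a, b, hn, hstep, hclose⟩ := hcyc
    have step : ∀ i < n, f (a (i + 1)) ≤ f (a i) ∧ f (a (i + 1)) ≠ f (a i) := by
      intro i hi
      obtain ⟨hVab, hcard, hsub, hcard', hne⟩ := hstep i hi
      obtain ⟨haK, hbK, hor⟩ := hV.1 _ _ hVab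
      have hne_ab : a i ≠ b i := by intro h; rw [h] at hcard; omega
      have hsub_ab : a i ⊆ b i := by
        rcases hor with h | h
        · exact absurd h.symm hne_ab
        · exact h.1
      have hT : Tset K f (a i) = ∅ := by
        by_contra h
        have h2 := (hgrad.2 (a i) haK).1 h
        rw [h2] at hVab
        cases hVab
      have hHne : (Hset K f (a i)).Nonempty := by
        rcases Set.eq_empty_or_nonempty (Hset K f (a i)) with h | h
        · exfalso
          have h2 := ((hgrad.2 (a i) haK).2 hT).1 h
          rw [h2] at hVab
          exact hne_ab (Option.some.inj hVab)
        · exact h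
      obtain ⟨τ, hτ⟩ := hHne
      have hHeq : Hset K f (a i) = {τ} :=
        Set.eq_singleton_iff_unique_mem.mpr ⟨hτ, fun x hx => (hmdm (a i) haK).1 hx hτ⟩
      have h2 := ((hgrad.2 (a i) haK).2 hT).2 τ hHeq
      rw [h2] at hVab
      have hτb : τ = b i := Option.some.inj hVab
      subst hτb
      have hfba : f (b i) ≤ f (a i) := hτ.2.2.2
      have haT : a i ∈ Tset K f (b i) := ⟨haK, hsub_ab, hcard, hfba⟩
      have ha'K : a (i + 1) ∈ K := by
        apply (hK _ hbK).2 _ hsub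
        rw [← Finset.card_pos]
        have h3 := Finset.card_pos.mpr (hK _ haK).1
        omega
      have ha'T : a (i + 1) ∉ Tset K f (b i) := fun h => hne ((hmdm (b i) hbK).2.1 h haT)
      have h4 := (hmdm (b i) hbK).2.2.2 (a (i + 1)) ha'K hsub
        (by omega : (b i).card = (a (i + 1)).card + 1) ha'T
      refine ⟨h4.1.trans hfba, fun h => h4.2 ?_⟩
      apply le_antisymm h4.1
      rw [h]
      exact hfba
    have main : ∀ i, i ≤ n → f (a i) ≤ f (a 0) ∧ (1 ≤ i → f (a i) ≠ f (a 0)) := by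
      intro i
      induction i with
      | zero => intro _; exact ⟨le_refl _, by omega⟩
      | succ i ih =>
        intro hi
        have hin : i < n := hi
        obtain ⟨hle, _⟩ := ih (by omega)
        obtain ⟨hle', hne'⟩ := step i hin
        refine ⟨hle'.trans hle, fun _ h => ?_⟩
        apply hne'
        apply le_antisymm hle'
        rw [h]
        exact hle
    have := (main n le_rfl).2 hn
    rw [hclose] at this
    exact this rfl
end

section
/- Let f : K → ℝᵏ be an mdm function and let V be its gradient vector field. Every nontrivial V-path α₀, β₀, α₁, ..., β_{n-1}, α_n satisfies f(α₀) ≽ f(β₀) ≻ f(α₁) ≽ ⋯ ≻ f(α_n) (alternating non-strict and strict inequalities in the componentwise order), and hence α₀ ≠ α_n; consequently V is acyclic. -/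
open Finset

variable {α : Type*} [DecidableEq α]

/-- Along every nontrivial `V`-path of the gradient `V` of an mdm function `f`,
`f(αᵢ) ≽ f(βᵢ) ≻ f(αᵢ₊₁)` (non-strict then strict in the componentwise order),
hence `α₀ ≠ αₙ`; consequently `V` is acyclic. -/
theorem stmt8 {k : ℕ} (K : Finset (Finset α)) (f : Finset α → Fin k → ℝ)
    (V : Finset α → Option (Finset α)) (hK : IsComplex K)
    (hf : IsMdm K f) (hV : IsGrad K f V) :
    (∀ (n : ℕ) (a b : ℕ → Finset α), 1 ≤ n →
      (∀ i < n, V (a i) = some (b i) ∧ (b i).card = (a i).card + 1 ∧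
        a (i + 1) ⊆ b i ∧ (a (i + 1)).card = (a i).card ∧ a (i + 1) ≠ a i) →
      (∀ i < n, f (b i) ≤ f (a i) ∧ f (a (i + 1)) ≤ f (b i) ∧ f (a (i + 1)) ≠ f (b i)) ∧
      a 0 ≠ a n) ∧
    AcyclicVF V := by

  have key : ∀ (a b : Finset α), V a = some b → b.card = a.card + 1 →
      ∀ a', a' ⊆ b → a'.card = a.card → a' ≠ a →
      f b ≤ f a ∧ f a' ≤ f b ∧ f a' ≠ f b := by
    intro a b hVab hcard a' hsub hcard' hne
    have haK : a ∈ K := by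
      by_contra h
      rw [hV.1 a h] at hVab; cases hVab
    obtain ⟨hT, hH⟩ := hV.2 a haK
    have hTa : Tset K f a = ∅ := by
      by_contra h; rw [hT h] at hVab; cases hVab
    obtain ⟨hH0, hH1⟩ := hH hTa
    have hbH : b ∈ Hset K f a := by
      by_cases hemp : Hset K f a = ∅
      · rw [hH0 hemp] at hVab
        have hba : b = a := by injection hVab with h; exact h.symm
        rw [hba] at hcard; omega
      · obtain ⟨τ, hτ⟩ := Set.nonempty_iff_ne_empty.mpr hemp
        have hsing : Hset K f a = {τ} := ((hf a haK).1).eq_singleton_of_mem hτ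
        have := hH1 τ hsing
        rw [this] at hVab
        have hbτ : b = τ := by injection hVab with h; exact h.symm
        rw [hbτ]; exact hτ
    obtain ⟨hbK, hab, hcardab, hfba⟩ := hbH
    have ha'K : a' ∈ K := by
      refine (hK b hbK).2 a' hsub ?_
      have : a.Nonempty := (hK a haK).1
      rw [← Finset.card_pos] at this ⊢; omega
    have haT : a ∈ Tset K f b := ⟨haK, hab, hcard, hfba⟩
    have ha'nT : a' ∉ Tset K f b := fun h => hne ((hf b hbK).2.1 h haT)
    have := (hf b hbK).2.2.2 a' ha'K hsub (by omega) ha'nT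
    exact ⟨hfba, this.1, this.2⟩
  constructor
  · intro n a b hn hpath
    have hstep : ∀ i < n, f (b i) ≤ f (a i) ∧ f (a (i+1)) ≤ f (b i) ∧ f (a (i+1)) ≠ f (b i) := by
      intro i hi
      obtain ⟨h1, h2, h3, h4, h5⟩ := hpath i hi
      exact key (a i) (b i) h1 h2 (a (i+1)) h3 h4 h5
    refine ⟨hstep, ?_⟩
    have hdec : ∀ i < n, f (a (i+1)) < f (a i) := by
      intro i hi
      obtain ⟨h1, h2, h3⟩ := hstep i hi
      exact lt_of_lt_of_le (lt_of_le_of_ne h2 h3) h1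
    have hchain : ∀ j, j ≤ n → 1 ≤ j → f (a j) < f (a 0) := by
      intro j
      induction j with
      | zero => omega
      | succ m ih =>
        intro hle _
        rcases Nat.eq_zero_or_pos m with hm | hm
        · subst hm; exact hdec 0 (by omega)
        · exact lt_trans (hdec m (by omega)) (ih (by omega) hm)
    intro h
    have := hchain n le_rfl hn
    rw [← h] at this
    exact lt_irrefl _ this
  · rintro ⟨n, a, b, hn, hpath, hclose⟩
    have hstep : ∀ i < n, f (b i) ≤ f (a i) ∧ f (a (i+1)) ≤ f (b i) ∧ f (a (i+1)) ≠ f (b i) := by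
      intro i hi
      obtain ⟨h1, h2, h3, h4, h5⟩ := hpath i hi
      exact key (a i) (b i) h1 h2 (a (i+1)) h3 h4 h5
    have hdec : ∀ i < n, f (a (i+1)) < f (a i) := by
      intro i hi
      obtain ⟨h1, h2, h3⟩ := hstep i hi
      exact lt_of_lt_of_le (lt_of_le_of_ne h2 h3) h1
    have hchain : ∀ j, j ≤ n → 1 ≤ j → f (a j) < f (a 0) := by
      intro j
      induction j with
      | zero => omega
      | succ m ih =>
        intro hle _
        rcases Nat.eq_zero_or_pos m with hm | hm
        · subst hm; exact hdec 0 (by omega)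
        · exact lt_trans (hdec m (by omega)) (ih (by omega) hm)
    have := hchain n le_rfl hn
    rw [hclose] at this
    exact lt_irrefl _ this
end

section
/- Let f : K → ℝᵏ be an mdm function and let σ, τ ∈ K with τ ∈ Cl σ \ Cl T_f(σ). Then f(σ) ≽ f(τ), with equality f(σ) = f(τ) only if σ = τ. -/
open Finset

variable {α : Type*} [DecidableEq α]

theorem stmt9_aux {k : ℕ} (K : Finset (Finset α)) (f : Finset α → Fin k → ℝ)
    (hK : IsComplex K) (hf : IsMdm K f) (σ : Finset α) (hσ : σ ∈ K) (n : ℕ) :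
    ∀ τ ∈ K, τ ⊆ σ → σ.card = τ.card + n →
    (∀ a ∈ Tset K f σ, ¬ τ ⊆ a) →
    f τ ≤ f σ ∧ (f τ = f σ → τ = σ) := by
  induction n with
  | zero =>
    intro τ hτ hface hcard _
    have : τ = σ := Finset.eq_of_subset_of_card_le hface (by omega)
    subst this
    exact ⟨le_rfl, fun _ => rfl⟩
  | succ n ih =>
    intro τ hτ hface hcard hnot
    rcases Nat.eq_zero_or_pos n with hn | hn
    · -- τ is a facet of σ
      subst hn
      have hT : τ ∉ Tset K f σ := fun h => hnot τ h (subset_refl τ)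
      have := (hf σ hσ).2.2.2 τ hτ hface (by omega) hT
      exact ⟨this.1, fun h => absurd h this.2⟩
    · -- codimension ≥ 2: pick two distinct cofacets of τ inside σ
      have hdiff : 1 < (σ \ τ).card := by
        rw [Finset.card_sdiff_of_subset hface]; omega
      obtain ⟨x, hx, y, hy, hxy⟩ := Finset.one_lt_card.mp hdiff
      have hxσ := (Finset.mem_sdiff.mp hx).1
      have hxτ := (Finset.mem_sdiff.mp hx).2
      have hyσ := (Finset.mem_sdiff.mp hy).1
      have hyτ := (Finset.mem_sdiff.mp hy).2
      set ν₁ := insert x τ with hν₁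
      set ν₂ := insert y τ with hν₂
      have hsub1 : ν₁ ⊆ σ := Finset.insert_subset hxσ hface
      have hsub2 : ν₂ ⊆ σ := Finset.insert_subset hyσ hface
      have hK1 : ν₁ ∈ K := (hK σ hσ).2 ν₁ hsub1 ⟨x, Finset.mem_insert_self x τ⟩
      have hK2 : ν₂ ∈ K := (hK σ hσ).2 ν₂ hsub2 ⟨y, Finset.mem_insert_self y τ⟩
      have hc1 : ν₁.card = τ.card + 1 := Finset.card_insert_of_notMem hxτ
      have hc2 : ν₂.card = τ.card + 1 := Finset.card_insert_of_notMem hyτ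
      have hne12 : ν₁ ≠ ν₂ := by
        intro h
        have : x ∈ ν₂ := h ▸ Finset.mem_insert_self x τ
        rcases Finset.mem_insert.mp this with h' | h'
        · exact hxy h'
        · exact hxτ h'
      -- at most one of ν₁, ν₂ is in Hset K f τ
      have key : ∃ ν, ν ∈ K ∧ τ ⊆ ν ∧ ν ⊆ σ ∧ ν.card = τ.card + 1 ∧ ν ∉ Hset K f τ := by
        by_cases h1 : ν₁ ∈ Hset K f τ
        · refine ⟨ν₂, hK2, Finset.subset_insert y τ, hsub2, hc2, fun h2 => ?_⟩
          exact hne12 ((hf τ hτ).1 h1 h2)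
        · exact ⟨ν₁, hK1, Finset.subset_insert x τ, hsub1, hc1, h1⟩
      obtain ⟨ν, hνK, hτν, hνσ, hνc, hνH⟩ := key
      have step := (hf τ hτ).2.2.1 ν hνK hτν hνc hνH
      have hnot' : ∀ a ∈ Tset K f σ, ¬ ν ⊆ a := fun a ha hsub =>
        hnot a ha (hτν.trans hsub)
      have rest := ih ν hνK hνσ (by omega) hnot'
      refine ⟨step.1.trans rest.1, fun h => ?_⟩
      have : f ν ≤ f τ := rest.1.trans h.ge
      exact absurd (le_antisymm step.1 this) step.2

/-- If `τ ∈ Cl σ \ Cl T_f(σ)` (i.e. `τ` is a face of `σ` not contained in any member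
of `T_f(σ)`), then `f(σ) ≽ f(τ)`, with equality only if `σ = τ`. -/
theorem stmt9 {k : ℕ} (K : Finset (Finset α)) (f : Finset α → Fin k → ℝ)
    (hK : IsComplex K) (hf : IsMdm K f) (σ τ : Finset α)
    (hσ : σ ∈ K) (hτ : τ ∈ K) (hface : τ ⊆ σ)
    (hnot : ∀ a ∈ Tset K f σ, ¬ τ ⊆ a) :
    f τ ≤ f σ ∧ (f τ = f σ → τ = σ) := by
  exact stmt9_aux K f hK hf σ hσ (σ.card - τ.card) τ hτ hface
    (by have := Finset.card_le_card hface; omega) hnot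
end

section
/- Let f : K → ℝᵏ be an mdm function and σ, τ ∈ K distinct with σ →_f τ (there is a nontrivial solution of the gradient flow from σ to τ). If σ is critical or τ is critical, then f(σ) ≻ f(τ) strictly in the componentwise order. -/
open Finset

variable {α : Type*} [DecidableEq α]

section stmt10aux
set_option linter.unusedSectionVars false
variable {k : ℕ} {K : Finset (Finset α)} {f : Finset α → Fin k → ℝ}
  {V : Finset α → Option (Finset α)}

private lemma sq' {a b c : Fin k → ℝ} (h1 : a ≤ b) (h2 : b ≤ c) (hne : a ≠ b ∨ b ≠ c) :
    a ≤ c ∧ a ≠ c := by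
  refine ⟨le_trans h1 h2, fun h => ?_⟩
  have : a = b := le_antisymm h1 (h ▸ h2)
  rcases hne with h' | h'
  · exact h' this
  · exact h' (this ▸ h)

private lemma facet_dich (hf : IsMdm K f) {σ δ : Finset α} (hσ : σ ∈ K) (hδ : δ ∈ K)
    (hsub : δ ⊆ σ) (hcard : σ.card = δ.card + 1) :
    f σ ≤ f δ ∨ (f δ ≤ f σ ∧ f δ ≠ f σ) := by
  by_cases h : f σ ≤ f δ
  · exact Or.inl h
  · exact Or.inr ((hf σ hσ).2.2.2 δ hδ hsub hcard (fun hmem => h hmem.2.2.2))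

private lemma cofacet_dich (hf : IsMdm K f) {γ ν : Finset α} (hγ : γ ∈ K) (hν : ν ∈ K)
    (hsub : γ ⊆ ν) (hcard : ν.card = γ.card + 1) :
    f ν ≤ f γ ∨ (f γ ≤ f ν ∧ f γ ≠ f ν) := by
  by_cases h : f ν ≤ f γ
  · exact Or.inl h
  · exact Or.inr ((hf γ hγ).2.2.1 ν hν hsub hcard (fun hmem => h hmem.2.2.2))

/-- Every proper nonempty face `δ` of `σ ∈ K` satisfies `f δ ≺ f σ`, unless it sits
below the (unique) facet `a ∈ T_f(σ)`, in which case `f δ ≼ f a`. -/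
private lemma claim_primal (hK : IsComplex K) (hf : IsMdm K f) :
    ∀ σ ∈ K, ∀ δ : Finset α, δ ⊆ σ → δ ≠ σ → δ.Nonempty →
      (f δ ≤ f σ ∧ f δ ≠ f σ) ∨ ∃ a, a ∈ Tset K f σ ∧ δ ⊆ a ∧ f δ ≤ f a := by
  suffices h : ∀ n, ∀ σ ∈ K, σ.card ≤ n → ∀ δ : Finset α, δ ⊆ σ → δ ≠ σ → δ.Nonempty →
      (f δ ≤ f σ ∧ f δ ≠ f σ) ∨ ∃ a, a ∈ Tset K f σ ∧ δ ⊆ a ∧ f δ ≤ f a by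
    exact fun σ hσ => h σ.card σ hσ le_rfl
  intro n
  induction n with
  | zero =>
    intro σ hσ hc δ hsub hne hd
    have h1 := Finset.card_lt_card (HasSubset.Subset.ssubset_of_ne hsub hne)
    omega
  | succ n ih =>
    intro σ hσ hc δ hsub hne hd
    have hδK : δ ∈ K := (hK σ hσ).2 δ hsub hd
    have hlt : δ.card < σ.card := Finset.card_lt_card (HasSubset.Subset.ssubset_of_ne hsub hne)
    by_cases hfac : σ.card = δ.card + 1
    · rcases facet_dich hf hσ hδK hsub hfac with h | h
      · exact Or.inr ⟨δ, ⟨hδK, hsub, hfac, h⟩, subset_rfl, le_rfl⟩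
      · exact Or.inl h
    · obtain ⟨x, hxσ, hxδ⟩ := Finset.exists_of_ssubset (HasSubset.Subset.ssubset_of_ne hsub hne)
      set γ := σ.erase x with hγdef
      have hγσ : γ ⊆ σ := Finset.erase_subset x σ
      have hδγ : δ ⊆ γ := Finset.subset_erase.2 ⟨hsub, hxδ⟩
      have hγcard : γ.card + 1 = σ.card := by
        rw [hγdef, Finset.card_erase_of_mem hxσ]
        have : 0 < σ.card := Finset.card_pos.2 ⟨x, hxσ⟩
        omega
      have hδγlt : δ.card < γ.card := by omega
      have hδγne : δ ≠ γ := by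
        intro h; rw [h] at hδγlt; omega
      have hγK : γ ∈ K := (hK σ hσ).2 γ hγσ (Finset.card_pos.1 (by omega))
      rcases ih γ hγK (by omega) δ hδγ hδγne hd with ⟨h1, h2⟩ | ⟨b, hbT, hδb, hfδb⟩
      · rcases facet_dich hf hσ hγK hγσ hγcard.symm with h | ⟨h3, h4⟩
        · exact Or.inr ⟨γ, ⟨hγK, hγσ, hγcard.symm, h⟩, hδγ, h1⟩
        · exact Or.inl (sq' h1 h3 (Or.inr h4))
      · obtain ⟨hbK, hbγ, hbcard, hfγb⟩ := hbT
        have hxb : x ∉ b := fun h => hxδ.elim (absurd (hbγ h) (Finset.notMem_erase x σ))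
        set γ' := insert x b with hγ'def
        have hγ'card : γ'.card = b.card + 1 := Finset.card_insert_of_notMem hxb
        have hbγ' : b ⊆ γ' := Finset.subset_insert x b
        have hγ'σ : γ' ⊆ σ := Finset.insert_subset hxσ (hbγ.trans hγσ)
        have hγ'K : γ' ∈ K := (hK σ hσ).2 γ' hγ'σ ⟨x, Finset.mem_insert_self x b⟩
        have hγ'ne : γ' ≠ γ := by
          intro h
          have : x ∈ γ := h ▸ Finset.mem_insert_self x b
          exact Finset.notMem_erase x σ this
        have hγ'facσ : σ.card = γ'.card + 1 := by omega
        by_cases hc1 : f γ' ≤ f b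
        · exfalso
          have hmem1 : γ ∈ Hset K f b := ⟨hγK, hbγ, hbcard, hfγb⟩
          have hmem2 : γ' ∈ Hset K f b := ⟨hγ'K, hbγ', hγ'card, hc1⟩
          exact hγ'ne ((hf b hbK).1 hmem2 hmem1)
        · have hstr : f b ≤ f γ' ∧ f b ≠ f γ' := by
            rcases facet_dich hf hγ'K hbK hbγ' hγ'card with h | h
            · exact absurd h hc1
            · exact h
          rcases facet_dich hf hσ hγ'K hγ'σ hγ'facσ with h | ⟨h3, h4⟩
          · exact Or.inr ⟨γ', ⟨hγ'K, hγ'σ, hγ'facσ, h⟩, hδb.trans hbγ',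
              le_trans hfδb hstr.1⟩
          · exact Or.inl (sq' (le_trans hfδb hstr.1) h3 (Or.inr h4))

/-- Dual statement: every proper coface `ν ∈ K` of `γ ∈ K` satisfies `f γ ≺ f ν`, unless
it sits above the (unique) cofacet `b ∈ H_f(γ)`, in which case `f b ≼ f ν`. -/
private lemma claim_dual (hK : IsComplex K) (hf : IsMdm K f) :
    ∀ γ ∈ K, ∀ ν ∈ K, γ ⊆ ν → γ ≠ ν →
      (f γ ≤ f ν ∧ f γ ≠ f ν) ∨ ∃ b, b ∈ Hset K f γ ∧ b ⊆ ν ∧ f b ≤ f ν := by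
  suffices h : ∀ n, ∀ γ ∈ K, ∀ ν ∈ K, γ ⊆ ν → γ ≠ ν → ν.card ≤ γ.card + n →
      (f γ ≤ f ν ∧ f γ ≠ f ν) ∨ ∃ b, b ∈ Hset K f γ ∧ b ⊆ ν ∧ f b ≤ f ν by
    exact fun γ hγ ν hν h1 h2 => h ν.card γ hγ ν hν h1 h2 (by omega)
  intro n
  induction n with
  | zero =>
    intro γ hγ ν hν hsub hne hcard
    have := Finset.card_lt_card (HasSubset.Subset.ssubset_of_ne hsub hne)
    omega
  | succ n ih =>
    intro γ hγ ν hν hsub hne hcard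
    have hlt : γ.card < ν.card := Finset.card_lt_card (HasSubset.Subset.ssubset_of_ne hsub hne)
    by_cases hfac : ν.card = γ.card + 1
    · rcases cofacet_dich hf hγ hν hsub hfac with h | h
      · exact Or.inr ⟨ν, ⟨hν, hsub, hfac, h⟩, subset_rfl, le_rfl⟩
      · exact Or.inl h
    · obtain ⟨x, hxν, hxγ⟩ := Finset.exists_of_ssubset (HasSubset.Subset.ssubset_of_ne hsub hne)
      set μ := insert x γ with hμdef
      have hμcard : μ.card = γ.card + 1 := Finset.card_insert_of_notMem hxγ
      have hγμ : γ ⊆ μ := Finset.subset_insert x γ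
      have hμν : μ ⊆ ν := Finset.insert_subset hxν hsub
      have hμK : μ ∈ K := (hK ν hν).2 μ hμν ⟨x, Finset.mem_insert_self x γ⟩
      have hμνne : μ ≠ ν := by
        intro h; rw [h] at hμcard; omega
      rcases ih μ hμK ν hν hμν hμνne (by omega) with ⟨h1, h2⟩ | ⟨b, hbH, hbν, hfbν⟩
      · rcases cofacet_dich hf hγ hμK hγμ hμcard with h | ⟨h3, h4⟩
        · exact Or.inr ⟨μ, ⟨hμK, hγμ, hμcard, h⟩, hμν, h1⟩
        · exact Or.inl (sq' h3 h1 (Or.inl h4))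
      · obtain ⟨hbK, hμb, hbcard, hfbμ⟩ := hbH
        have hμbne : μ ≠ b := by intro h; rw [h] at hbcard; omega
        obtain ⟨y, hyb, hyμ⟩ := Finset.exists_of_ssubset (HasSubset.Subset.ssubset_of_ne hμb hμbne)
        have hyγ : y ∉ γ := fun h => hyμ (hγμ h)
        set μ' := insert y γ with hμ'def
        have hμ'card : μ'.card = γ.card + 1 := Finset.card_insert_of_notMem hyγ
        have hγμ' : γ ⊆ μ' := Finset.subset_insert y γ
        have hμ'b : μ' ⊆ b := Finset.insert_subset hyb (hγμ.trans hμb)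
        have hμ'ν : μ' ⊆ ν := hμ'b.trans hbν
        have hμ'K : μ' ∈ K := (hK ν hν).2 μ' hμ'ν ⟨y, Finset.mem_insert_self y γ⟩
        have hμ'μne : μ' ≠ μ := by
          intro h
          exact hyμ (h ▸ Finset.mem_insert_self y γ)
        have hbμ'card : b.card = μ'.card + 1 := by omega
        by_cases hc1 : f b ≤ f μ'
        · exfalso
          have hmem1 : μ ∈ Tset K f b := ⟨hμK, hμb, hbcard.symm ▸ by omega, hfbμ⟩
          have hmem2 : μ' ∈ Tset K f b := ⟨hμ'K, hμ'b, hbμ'card, hc1⟩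
          exact hμ'μne ((hf b hbK).2.1 hmem2 hmem1)
        · have hstr : f μ' ≤ f b ∧ f μ' ≠ f b := by
            rcases cofacet_dich hf hμ'K hbK hμ'b hbμ'card with h | h
            · exact absurd h hc1
            · exact h
          rcases cofacet_dich hf hγ hμ'K hγμ' hμ'card with h | ⟨h3, h4⟩
          · exact Or.inr ⟨μ', ⟨hμ'K, hγμ', hμ'card, h⟩, hμ'ν, le_trans hstr.1 hfbν⟩
          · exact Or.inl (sq' h3 (le_trans hstr.1 hfbν) (Or.inl h4))

/-- If the gradient field pairs `γ` with a distinct cell `β`, then `β` is the unique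
element of `H_f(γ)` and `T_f(γ) = ∅`. -/
private lemma grad_pair (hf : IsMdm K f) (hV : IsGrad K f V) {γ β : Finset α}
    (h : V γ = some β) (hneβγ : β ≠ γ) :
    γ ∈ K ∧ β ∈ Hset K f γ ∧ Tset K f γ = ∅ ∧ ∀ b ∈ Hset K f γ, b = β := by
  have hγK : γ ∈ K := by
    by_contra h'
    rw [hV.1 γ h'] at h
    cases h
  obtain ⟨hT, hH⟩ := hV.2 γ hγK
  have hTe : Tset K f γ = ∅ := by
    by_contra h'
    rw [hT h'] at h
    cases h
  have hHne : Hset K f γ ≠ ∅ := by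
    intro h'
    have := (hH hTe).1 h'
    rw [this] at h
    exact hneβγ (Option.some.inj h).symm
  obtain ⟨b, hb⟩ := Set.nonempty_iff_ne_empty.2 hHne
  have hsing : Hset K f γ = {b} :=
    Set.eq_singleton_iff_unique_mem.2 ⟨hb, fun x hx => (hf γ hγK).1 hx hb⟩
  have hVb := (hH hTe).2 b hsing
  rw [hVb] at h
  have hbβ : b = β := Option.some.inj h
  subst hbβ
  exact ⟨hγK, hb, hTe, fun b' hb' => (hf γ hγK).1 hb' hb⟩

end stmt10aux

/-- If `σ ≠ τ`, there is a nontrivial solution of the gradient flow from `σ` to `τ`,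
and `σ` or `τ` is critical, then `f(σ) ≻ f(τ)` strictly. -/
theorem stmt10 {k : ℕ} (K : Finset (Finset α)) (f : Finset α → Fin k → ℝ)
    (V : Finset α → Option (Finset α)) (hK : IsComplex K)
    (hf : IsMdm K f) (hV : IsGrad K f V) (σ τ : Finset α)
    (hσ : σ ∈ K) (hτ : τ ∈ K) (hne : σ ≠ τ) (hconn : Connects V σ τ)
    (hcrit : IsCritical K f σ ∨ IsCritical K f τ) :
    f τ ≤ f σ ∧ f τ ≠ f σ := by
  obtain ⟨n, ρ, hn1, hρ0, hρn, hstep⟩ := hconn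
  rcases hcrit with hc | hc
  · -- σ critical : forward invariant
    have key : ∀ i, i ≤ n → ρ i = σ ∨
        ∀ ν ∈ K, ν ⊆ ρ i → f ν ≤ f σ ∧ f ν ≠ f σ := by
      intro i
      induction i with
      | zero => exact fun _ => Or.inl hρ0
      | succ i ih =>
        intro hi
        have hstepi := hstep i (by omega)
        rcases ih (by omega) with h | h
        · -- at σ, critical step
          rw [h] at hstepi
          have hVσ : V σ = some σ := ((hV.2 σ hσ).2 hc.2).1 hc.1
          simp only [flow, hVσ, if_pos rfl, Set.mem_setOf_eq] at hstepi
          obtain ⟨hne', hsub'⟩ := hstepi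
          by_cases hδ : ρ (i+1) = σ
          · exact Or.inl hδ
          · refine Or.inr fun ν hνK hνsub => ?_
            have hνσ : ν ⊆ σ := hνsub.trans hsub'
            have hνneσ : ν ≠ σ := fun h' => hδ (subset_antisymm hsub' (h' ▸ hνsub))
            rcases claim_primal hK hf σ hσ ν hνσ hνneσ (hK ν hνK).1 with h' | ⟨a, haT, _, _⟩
            · exact h'
            · rw [hc.2] at haT
              exact absurd haT (Set.notMem_empty a)
        · cases hVγ : V (ρ i) with
          | none =>
            simp only [flow, hVγ, Set.mem_setOf_eq] at hstepi
            obtain ⟨h1, h2, h3, h4⟩ := hstepi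
            by_cases hδ : ρ (i+1) = σ
            · exact Or.inl hδ
            · exact Or.inr fun ν hνK hνsub => h ν hνK (hνsub.trans h2)
          | some β =>
            by_cases hβγ : β = ρ i
            · simp only [flow, hVγ, if_pos hβγ, Set.mem_setOf_eq] at hstepi
              obtain ⟨h1, h2⟩ := hstepi
              by_cases hδ : ρ (i+1) = σ
              · exact Or.inl hδ
              · exact Or.inr fun ν hνK hνsub => h ν hνK (hνsub.trans h2)
            · simp only [flow, hVγ, if_neg hβγ, Set.mem_singleton_iff] at hstepi
              obtain ⟨hγK, hβH, hTγ, huniq⟩ := grad_pair hf hV hVγ hβγ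
              obtain ⟨hβK, hγβ, hβcard, hfβγ⟩ := hβH
              have hγT : ρ i ∈ Tset K f β := ⟨hγK, hγβ, hβcard, hfβγ⟩
              have hfγσ := h (ρ i) hγK subset_rfl
              rw [hstepi]
              by_cases hβσ : β = σ
              · exact Or.inl hβσ
              · refine Or.inr fun ν hνK hνβ => ?_
                have hβσ' : f β ≤ f σ ∧ f β ≠ f σ :=
                  sq' hfβγ hfγσ.1 (Or.inr hfγσ.2)
                by_cases hνβeq : ν = β
                · exact hνβeq ▸ hβσ'
                · rcases claim_primal hK hf β hβK ν hνβ hνβeq (hK ν hνK).1 with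
                    ⟨l1, l2⟩ | ⟨a, haT, hνa, _⟩
                  · exact sq' l1 hβσ'.1 (Or.inr hβσ'.2)
                  · have ha : a = ρ i := (hf β hβK).2.1 haT hγT
                    exact h ν hνK (ha ▸ hνa)
    rcases key n le_rfl with h | h
    · exact absurd (hρn ▸ h) hne.symm
    · exact h τ hτ (by rw [hρn])
  · -- τ critical : backward invariant
    have key : ∀ i, i ≤ n → ρ (n - i) = τ ∨
        ∀ ν ∈ K, ρ (n - i) ⊆ ν → ν ≠ τ → f τ ≤ f ν ∧ f τ ≠ f ν := by
      intro i
      induction i with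
      | zero => exact fun _ => Or.inl (by simpa using hρn)
      | succ i ih =>
        intro hi
        have hj : n - (i+1) + 1 = n - i := by omega
        have hstepj := hstep (n - (i+1)) (by omega)
        rw [hj] at hstepj
        have hT := ih (by omega)
        by_cases hγτ : ρ (n - (i+1)) = τ
        · exact Or.inl hγτ
        · right
          have hbelow : ∀ ν ∈ K, τ ⊆ ν → ν ≠ τ → f τ ≤ f ν ∧ f τ ≠ f ν := by
            intro ν hνK hτν hντ
            rcases claim_dual hK hf τ hτ ν hνK hτν (Ne.symm hντ) with l | ⟨b, hbH, _, _⟩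
            · exact l
            · rw [hc.1] at hbH
              exact absurd hbH (Set.notMem_empty b)
          cases hVγ : V (ρ (n - (i+1))) with
          | none =>
            simp only [flow, hVγ, Set.mem_setOf_eq] at hstepj
            obtain ⟨h1, hδγ, h3, h4⟩ := hstepj
            rcases hT with hδτ | hTδ
            · intro ν hνK hγν hντ
              exact hbelow ν hνK ((hδτ ▸ hδγ).trans hγν) hντ
            · exact fun ν hνK hγν hντ => hTδ ν hνK (hδγ.trans hγν) hντ
          | some β =>
            by_cases hβγ : β = ρ (n - (i+1))
            · simp only [flow, hVγ, if_pos hβγ, Set.mem_setOf_eq] at hstepj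
              obtain ⟨h1, hδγ⟩ := hstepj
              rcases hT with hδτ | hTδ
              · intro ν hνK hγν hντ
                exact hbelow ν hνK ((hδτ ▸ hδγ).trans hγν) hντ
              · exact fun ν hνK hγν hντ => hTδ ν hνK (hδγ.trans hγν) hντ
            · simp only [flow, hVγ, if_neg hβγ, Set.mem_singleton_iff] at hstepj
              obtain ⟨hγK, hβH, hTγ, huniq⟩ := grad_pair hf hV hVγ hβγ
              obtain ⟨hβK, hγβ, hβcard, hfβγ⟩ := hβH
              have hβτ : β ≠ τ := by
                intro h'
                have : ρ (n - (i+1)) ∈ Tset K f τ := h' ▸ ⟨hγK, hγβ, hβcard, hfβγ⟩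
                rw [hc.2] at this
                exact Set.notMem_empty _ this
              rcases hT with hδτ | hTδ
              · exact absurd (hstepj ▸ hδτ) hβτ
              · rw [hstepj] at hTδ
                have hfτβ := hTδ β hβK subset_rfl hβτ
                have hfτγ : f τ ≤ f (ρ (n - (i+1))) ∧ f τ ≠ f (ρ (n - (i+1))) :=
                  sq' hfτβ.1 hfβγ (Or.inl hfτβ.2)
                intro ν hνK hγν hντ
                by_cases hνγ : ν = ρ (n - (i+1))
                · exact hνγ ▸ hfτγ
                · rcases claim_dual hK hf (ρ (n - (i+1))) hγK ν hνK hγν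
                      (fun h' => hνγ h'.symm) with ⟨l1, l2⟩ | ⟨b, hbH, hbν, _⟩
                  · exact sq' hfτγ.1 l1 (Or.inr l2)
                  · have hb : b = β := huniq b hbH
                    exact hTδ ν hνK (hb ▸ hbν) hντ
    rcases key n le_rfl with h | h
    · rw [Nat.sub_self, hρ0] at h
      exact absurd h hne
    · rw [Nat.sub_self, hρ0] at h
      exact h σ hσ subset_rfl hne
end

section
/- Let f : K → ℝᵏ be an mdm function, σ a simplex of dimension p, and τ any coface of σ. Then there exists a cofacet β of σ (dimension p+1) with σ ⊂ β ⊆ τ and f(β) ≼ f(τ). -/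
open Finset

variable {α : Type*} [DecidableEq α]

/-- For an mdm function `f` and any proper coface `τ ⊃ σ`, there is a cofacet `β` of
`σ` with `σ ⊂ β ⊆ τ` and `f(β) ≼ f(τ)`. -/
theorem stmt11 {k : ℕ} (K : Finset (Finset α)) (f : Finset α → Fin k → ℝ)
    (hK : IsComplex K) (hf : IsMdm K f) (σ τ : Finset α)
    (hσ : σ ∈ K) (hτ : τ ∈ K) (hss : σ ⊂ τ) :
    ∃ β ∈ K, σ ⊆ β ∧ β ⊆ τ ∧ β.card = σ.card + 1 ∧ f β ≤ f τ := by
  have key : ∀ n (τ : Finset α), τ.card ≤ n → τ ∈ K → σ ⊂ τ →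
      ∃ β ∈ K, σ ⊆ β ∧ β ⊆ τ ∧ β.card = σ.card + 1 ∧ f β ≤ f τ := by
    intro n
    induction n with
    | zero =>
      intro τ hle hτ hss
      have := Finset.card_lt_card hss
      omega
    | succ n ih =>
      intro τ hle hτ hss
      by_cases hcase : τ.card = σ.card + 1
      · exact ⟨τ, hτ, hss.subset, subset_rfl, hcase, le_rfl⟩
      · have hlt := Finset.card_lt_card hss
        have hcd : 2 ≤ (τ \ σ).card := by
          rw [Finset.card_sdiff_of_subset hss.subset]; omega
        obtain ⟨x, hx, y, hy, hxy⟩ := Finset.one_lt_card.mp hcd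
        have hxτ := (Finset.mem_sdiff.mp hx).1
        have hyτ := (Finset.mem_sdiff.mp hy).1
        have hxσ := (Finset.mem_sdiff.mp hx).2
        have hyσ := (Finset.mem_sdiff.mp hy).2
        have key2 : ∀ z ∈ τ, z ∉ σ →
            τ.erase z ∈ K ∧ σ ⊂ τ.erase z ∧ τ.card = (τ.erase z).card + 1 := by
          intro z hz hzσ
          have hcard : (τ.erase z).card + 1 = τ.card := by
            rw [Finset.card_erase_of_mem hz]; omega
          have hsub : σ ⊆ τ.erase z := fun a ha =>
            Finset.mem_erase.mpr ⟨fun h => hzσ (h ▸ ha), hss.subset ha⟩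
          have hne : (τ.erase z).Nonempty := ((hK σ hσ).1).mono hsub
          refine ⟨(hK τ hτ).2 _ (Finset.erase_subset _ _) hne, ?_, hcard.symm⟩
          refine hsub.ssubset_of_ne ?_
          intro h
          rw [← h] at hcard
          omega
        obtain ⟨hx1, hx2, hx3⟩ := key2 x hxτ hxσ
        obtain ⟨hy1, hy2, hy3⟩ := key2 y hyτ hyσ
        have hone : τ.erase x ∉ Tset K f τ ∨ τ.erase y ∉ Tset K f τ := by
          by_contra h
          push_neg at h
          have := (hf τ hτ).2.1 h.1 h.2
          have : x ∈ τ.erase x := this ▸ Finset.mem_erase.mpr ⟨hxy, hxτ⟩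
          exact (Finset.mem_erase.mp this).1 rfl
        obtain ⟨z, hz1, hz2, hz3, hzT⟩ :
            ∃ z, τ.erase z ∈ K ∧ σ ⊂ τ.erase z ∧ τ.card = (τ.erase z).card + 1 ∧
              τ.erase z ∉ Tset K f τ := by
          rcases hone with h | h
          · exact ⟨x, hx1, hx2, hx3, h⟩
          · exact ⟨y, hy1, hy2, hy3, h⟩
        have hfle : f (τ.erase z) ≤ f τ :=
          ((hf τ hτ).2.2.2 _ hz1 (Finset.erase_subset _ _) hz3 hzT).1
        obtain ⟨β, hβK, hβ1, hβ2, hβ3, hβ4⟩ := ih (τ.erase z) (by omega) hz1 hz2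
        exact ⟨β, hβK, hβ1, hβ2.trans (Finset.erase_subset _ _), hβ3, hβ4.trans hfle⟩
  exact key τ.card τ le_rfl hτ hss
end

section
/- Let Π_V be a flow on a simplicial complex K and L ⊆ K a V-compatible subset. Then L is a subcomplex of K (closed under taking faces) if and only if Π_V(L) ⊆ L. -/
open Finset

variable {α : Type*} [DecidableEq α]

/-- A `V`-compatible subset `L ⊆ K` is a subcomplex of `K` (closed under taking
nonempty faces) iff `Π_V(L) ⊆ L`. -/
theorem stmt12 (K : Finset (Finset α)) (V : Finset α → Option (Finset α))
    (hK : IsComplex K) (hV : IsDVF K V) (L : Set (Finset α))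
    (hLK : ∀ σ ∈ L, σ ∈ K) (hcomp : VCompatible V L) :
    (∀ σ ∈ L, ∀ τ, τ ⊆ σ → τ.Nonempty → τ ∈ L) ↔ (∀ σ ∈ L, flow V σ ⊆ L) := by
  obtain ⟨hV1, hV2, hV3, hV4, hV5⟩ := hV
  constructor
  · intro h σ hσ τ hτ
    unfold flow at hτ
    cases hVσ : V σ with
    | some β =>
      simp only [hVσ] at hτ
      by_cases hβσ : β = σ
      · simp only [if_pos hβσ] at hτ
        exact h σ hσ τ hτ.2 hτ.1
      · simp only [if_neg hβσ] at hτ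
        simp only [Set.mem_singleton_iff] at hτ
        subst hτ
        exact (hcomp σ τ hVσ).1 hσ
    | none =>
      simp only [hVσ] at hτ
      exact h σ hσ τ hτ.2.1 hτ.1
  · intro h σ hσ τ hτσ hτne
    cases hVσ : V σ with
    | some β =>
      rcases (hV1 σ β hVσ).2.2 with hβσ | ⟨hσβ, hcard⟩
      · -- fixed: flow contains all faces
        apply h σ hσ
        unfold flow
        simp only [hVσ, if_pos hβσ]
        exact ⟨hτne, hτσ⟩
      · -- V σ = some β, β ≠ σ
        have hβσ : β ≠ σ := by
          intro e; subst e; omega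
        have hβL : β ∈ L := (hcomp σ β hVσ).1 hσ
        by_cases hτσeq : τ = σ
        · rwa [hτσeq]
        -- consider V β
        cases hVβ : V β with
        | some γ =>
          have : V β = some β := hV4 β (by rw [hVβ]; rfl) ⟨σ, hVσ⟩
          apply h β hβL
          unfold flow
          simp only [this, if_pos rfl]
          exact ⟨hτne, hτσ.trans hσβ⟩
        | none =>
          apply h β hβL
          unfold flow
          simp only [hVβ]
          refine ⟨hτne, hτσ.trans hσβ, ?_, ?_⟩
          · intro e; subst e
            have := Finset.card_le_card hτσ
            omega
          · intro hVτ
            exact hτσeq (hV2 τ σ β hVτ hVσ)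
    | none =>
      by_cases hτσeq : τ = σ
      · rwa [hτσeq]
      by_cases hVτ : V τ = some σ
      · exact (hcomp τ σ hVτ).2 hσ
      · apply h σ hσ
        unfold flow
        simp only [hVσ]
        exact ⟨hτne, hτσ, hτσeq, hVτ⟩
end

section
/- Let Π_V be an acyclic flow on a finite simplicial complex K and let L ⊆ K be a V-compatible subcomplex containing all fixed points of V. Then K collapses onto L. -/
open Finset

variable {α : Type*} [DecidableEq α]

/-- `σ` is a free face of `K` with unique cofacet `τ`. -/
def IsFreePair (K : Finset (Finset α)) (σ τ : Finset α) : Prop :=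
  σ ∈ K ∧ τ ∈ K ∧ σ ⊆ τ ∧ τ.card = σ.card + 1 ∧
    ∀ υ ∈ K, σ ⊆ υ → υ.card = σ.card + 1 → υ = τ

/-- An elementary collapse removes a free face together with its unique cofacet. -/
def ElemCollapse (K K' : Finset (Finset α)) : Prop :=
  ∃ σ τ, IsFreePair K σ τ ∧ K' = (K.erase σ).erase τ

/-- `K` collapses onto `L` by a finite sequence of elementary collapses. -/
def Collapses (K L : Finset (Finset α)) : Prop :=
  Relation.ReflTransGen ElemCollapse K L

lemma flow_some {V : Finset α → Option (Finset α)} {σ β : Finset α}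
    (h : V σ = some β) (hne : β ≠ σ) : flow V σ = {β} := by
  unfold flow; rw [h]; simp [hne]

lemma flow_none {V : Finset α → Option (Finset α)} {σ : Finset α}
    (h : V σ = none) :
    flow V σ = {τ | τ.Nonempty ∧ τ ⊆ σ ∧ τ ≠ σ ∧ V τ ≠ some σ} := by
  unfold flow; rw [h]

lemma connects_one {V : Finset α → Option (Finset α)} {a b : Finset α}
    (h : b ∈ flow V a) : Connects V a b := by
  refine ⟨1, fun k => if k = 0 then a else b, le_refl _, by simp, by simp, ?_⟩
  intro i hi
  interval_cases i
  simpa using h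

lemma connects_trans {V : Finset α → Option (Finset α)} {a b c : Finset α}
    (h1 : Connects V a b) (h2 : Connects V b c) : Connects V a c := by
  obtain ⟨n, ρ, hn, h0, hn', hs⟩ := h1
  obtain ⟨m, ρ', hm, h0', hm', hs'⟩ := h2
  refine ⟨n + m, fun k => if k ≤ n then ρ k else ρ' (k - n), by omega, by simp [h0], ?_, ?_⟩
  · have : ¬ (n + m ≤ n) := by omega
    simp only [this, if_false]
    simpa using hm'
  · intro i hi
    by_cases h1i : i + 1 ≤ n
    · have h2i : i ≤ n := by omega
      simp only [h1i, h2i, if_true]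
      exact hs i (by omega)
    · simp only [h1i, if_false]
      by_cases h3i : i ≤ n
      · have : i = n := by omega
        subst this
        simp only [le_refl, if_true]
        have : i + 1 - i = 1 := by omega
        rw [this, hn', ← h0']
        exact hs' 0 (by omega)
      · simp only [h3i, if_false]
        have e1 : i + 1 - n = (i - n) + 1 := by omega
        rw [e1]
        exact hs' (i - n) (by omega)

/-- If `Π_V` is acyclic and `L` is a `V`-compatible subcomplex of `K` containing all
fixed points of `V`, then `K` collapses onto `L`. -/
theorem stmt13 (K : Finset (Finset α)) (V : Finset α → Option (Finset α))
    (hK : IsComplex K) (hV : IsDVF K V)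
    (hacyc : ∀ σ τ : Finset α, Connects V σ τ → Connects V τ σ → σ = τ)
    (L : Finset (Finset α)) (hLK : L ⊆ K)
    (hLsub : ∀ σ ∈ L, ∀ τ, τ ⊆ σ → τ.Nonempty → τ ∈ L)
    (hcomp : VCompatible V (↑L : Set (Finset α)))
    (hfix : ∀ σ, V σ = some σ → σ ∈ L) :
    Collapses K L := by
  classical
  obtain ⟨hV1, hV2, hV3, hV4, hV5⟩ := hV
  suffices main : ∀ M : Finset (Finset α), M ⊆ K → IsComplex M →
      VCompatible V (↑M : Set (Finset α)) → L ⊆ M → Collapses M L by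
    refine main K (Finset.Subset.refl K) hK ?_ hLK
    intro σ τ h
    exact ⟨fun _ => (hV1 σ τ h).2.1, fun _ => (hV1 σ τ h).1⟩
  intro M
  induction M using Finset.strongInductionOn with
  | _ M ih =>
  intro hMK hMc hMcomp hLM
  by_cases hML : M = L
  · rw [hML]
    exact Relation.ReflTransGen.refl
  -- the complement D and the maximal dimension d
  set D := M \ L with hDdef
  have hmemD : ∀ {x : Finset α}, x ∈ D ↔ x ∈ M ∧ x ∉ L := fun {x} => Finset.mem_sdiff
  have hDne : D.Nonempty := by
    obtain ⟨x, hxM, hxL⟩ := Finset.exists_of_ssubset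
      (lt_of_le_of_ne hLM (fun h => hML h.symm))
    exact ⟨x, hmemD.mpr ⟨hxM, hxL⟩⟩
  obtain ⟨τ₀, hτ₀D, hτ₀max⟩ := D.exists_max_image Finset.card hDne
  set d := τ₀.card with hd
  have hfixD : ∀ σ ∈ D, V σ ≠ some σ := fun σ hσ h => (hmemD.mp hσ).2 (hfix σ h)
  have hpairD : ∀ {σ τ : Finset α}, V σ = some τ → (σ ∈ D ↔ τ ∈ D) := by
    intro σ τ h
    have h1 := hMcomp σ τ h
    have h2 := hcomp σ τ h
    simp only [Finset.coe_mem, Set.mem_setOf_eq, Finset.mem_coe] at h1 h2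
    rw [hmemD, hmemD]
    tauto
  have hnone : ∀ τ ∈ D, (∃ σ, V σ = some τ) → V τ = none := by
    intro τ hτ hex
    cases hvt : V τ with
    | none => rfl
    | some ρ =>
      have h4 := hV4 τ (by rw [hvt]; rfl) hex
      exact absurd h4 (hfixD τ hτ)
  have hpre : ∀ τ ∈ D, τ.card = d →
      ∃ σ, V σ = some τ ∧ σ ∈ D ∧ σ ⊆ τ ∧ τ.card = σ.card + 1 := by
    intro τ hτ hcard
    have hτK : τ ∈ K := hMK (hmemD.mp hτ).1
    rcases hV3 τ hτK with hs | ⟨σ, hσ⟩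
    · obtain ⟨ρ, hρ⟩ := Option.isSome_iff_exists.mp hs
      rcases (hV1 τ ρ hρ).2.2 with h | ⟨hsub, hc⟩
      · subst h; exact absurd hρ (hfixD _ hτ)
      · exfalso
        have hρD : ρ ∈ D := (hpairD hρ).mp hτ
        have := hτ₀max ρ hρD
        omega
    · refine ⟨σ, hσ, (hpairD hσ).mpr hτ, ?_⟩
      rcases (hV1 σ τ hσ).2.2 with h | ⟨hsub, hc⟩
      · subst h; exact absurd hσ (hfixD _ hτ)
      · exact ⟨hsub, hc⟩
  -- existence of a free pair of top dimension
  have hfree : ∃ τ ∈ D, τ.card = d ∧ ∃ σ, V σ = some τ ∧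
      ∀ υ ∈ M, σ ⊆ υ → υ.card = σ.card + 1 → υ = τ := by
    by_contra hcon
    push_neg at hcon
    set T := D.filter (fun x => x.card = d) with hT
    have hmemT : ∀ {x : Finset α}, x ∈ T ↔ x ∈ D ∧ x.card = d := by
      intro x; rw [hT, Finset.mem_filter]
    have hτ₀T : τ₀ ∈ T := hmemT.mpr ⟨hτ₀D, rfl⟩
    have stepT : ∀ x ∈ T, ∃ y, y ∈ T ∧
        ∀ σ σ', V σ = some x → V σ' = some y → Connects V σ' σ ∧ σ' ≠ σ := by
      intro τ hτT
      obtain ⟨hτD, hτcard⟩ := hmemT.mp hτT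
      obtain ⟨σ, hσV, hσD, hσsub, hσc⟩ := hpre τ hτD hτcard
      obtain ⟨υ, hυM, hsubυ, hυc, hυne⟩ := hcon τ hτD hτcard σ hσV
      have hσK : σ ∈ K := (hV1 σ τ hσV).1
      have hσne : σ.Nonempty := (hK σ hσK).1
      have hσL : σ ∉ L := (hmemD.mp hσD).2
      have hυL : υ ∉ L := fun h => hσL (hLsub υ h σ hsubυ hσne)
      have hυD : υ ∈ D := hmemD.mpr ⟨hυM, hυL⟩
      have hυcard : υ.card = d := by omega
      obtain ⟨σ', hσ'V, hσ'D, hσ'sub, hσ'c⟩ := hpre υ hυD hυcard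
      refine ⟨υ, hmemT.mpr ⟨hυD, hυcard⟩, ?_⟩
      intro a a' haV ha'V
      obtain rfl : a = σ := hV2 a σ τ haV hσV
      obtain rfl : a' = σ' := hV2 a' σ' υ ha'V hσ'V
      have hτυ : τ ≠ υ := fun h => hυne h.symm
      constructor
      · have s1 : υ ∈ flow V a' := by
          rw [flow_some hσ'V (fun h => hfixD _ hσ'D (h ▸ hσ'V))]
          rfl
        have s2 : a ∈ flow V υ := by
          rw [flow_none (hnone υ hυD ⟨a', hσ'V⟩)]
          refine ⟨hσne, hsubυ, ?_, ?_⟩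
          · intro h; rw [h] at hσc; omega
          · intro h; rw [hσV] at h; exact hτυ (Option.some_injective _ h)
        exact connects_trans (connects_one s1) (connects_one s2)
      · intro h
        rw [h, hσV] at hσ'V
        exact hτυ (Option.some_injective _ hσ'V)
    let next : {x : Finset α // x ∈ T} → {x : Finset α // x ∈ T} := fun x =>
      ⟨(stepT x.1 x.2).choose, (stepT x.1 x.2).choose_spec.1⟩
    let g : ℕ → {x : Finset α // x ∈ T} := fun n => next^[n] ⟨τ₀, hτ₀T⟩
    have hpreT : ∀ x : {x : Finset α // x ∈ T}, ∃ σ, V σ = some x.1 := by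
      intro x
      obtain ⟨hxD, hxc⟩ := hmemT.mp x.2
      obtain ⟨σ, hσV, -⟩ := hpre x.1 hxD hxc
      exact ⟨σ, hσV⟩
    let sg : ℕ → Finset α := fun n => (hpreT (g n)).choose
    have hsg : ∀ n, V (sg n) = some (g n).1 := fun n => (hpreT (g n)).choose_spec
    have hkey : ∀ n, Connects V (sg (n + 1)) (sg n) ∧ sg (n + 1) ≠ sg n := by
      intro n
      have hgn1 : g (n + 1) = next (g n) := Function.iterate_succ_apply' next n _
      have h := (stepT (g n).1 (g n).2).choose_spec.2
      refine h (sg n) (sg (n + 1)) (hsg n) ?_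
      rw [hsg (n + 1), hgn1]
    have hchain : ∀ k n, Connects V (sg (n + k + 1)) (sg n) := by
      intro k
      induction k with
      | zero => intro n; simpa using (hkey n).1
      | succ k ihk =>
        intro n
        have e : n + (k + 1) + 1 = (n + k + 1) + 1 := by omega
        rw [e]
        exact connects_trans (hkey (n + k + 1)).1 (ihk n)
    have final : ∀ i j, i < j → g i = g j → False := by
      intro i j hlt heq
      have hsij : sg i = sg j :=
        congrArg (fun x : {x : Finset α // x ∈ T} => (hpreT x).choose) heq
      rcases Nat.eq_or_lt_of_le hlt with h | h
      · apply (hkey i).2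
        have h' : i + 1 = j := h
        rw [h']
        exact hsij.symm
      · -- j ≥ i + 2
        have c2 : Connects V (sg (i + 1)) (sg j) := by
          rw [← hsij]; exact (hkey i).1
        have c1 : Connects V (sg j) (sg (i + 1)) := by
          have e : (i + 1) + (j - i - 2) + 1 = j := by omega
          have := hchain (j - i - 2) (i + 1)
          rwa [e] at this
        have := hacyc _ _ c2 c1
        exact (hkey i).2 (this.trans hsij.symm)
    obtain ⟨i, j, hij, hgij⟩ := Finite.exists_ne_map_eq_of_infinite g
    rcases hij.lt_or_gt with h | h
    · exact final i j h hgij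
    · exact final j i h hgij.symm
  -- use the free pair to collapse
  obtain ⟨τ, hτD, hτcard, σ₀, hσ₀V, huniq₀⟩ := hfree
  obtain ⟨σ, hσV, hσD, hσsub, hσc⟩ := hpre τ hτD hτcard
  obtain rfl : σ = σ₀ := hV2 σ σ₀ τ hσV hσ₀V
  have huniq : ∀ υ ∈ M, σ ⊆ υ → υ.card = σ.card + 1 → υ = τ := huniq₀
  have hσM : σ ∈ M := (hmemD.mp hσD).1
  have hσL : σ ∉ L := (hmemD.mp hσD).2
  have hτM : τ ∈ M := (hmemD.mp hτD).1
  have hτL : τ ∉ L := (hmemD.mp hτD).2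
  have hτne : τ.Nonempty := (hMc τ hτM).1
  have hστne : σ ≠ τ := fun h => by rw [h] at hσc; omega
  -- maximality of τ in M
  have hmaxτ : ∀ ρ ∈ M, τ ⊆ ρ → ρ = τ := by
    intro ρ hρ hsub
    by_contra hne
    have hρL : ρ ∉ L := fun h => hτL (hLsub ρ h τ hsub hτne)
    have hρD : ρ ∈ D := hmemD.mpr ⟨hρ, hρL⟩
    have h1 := hτ₀max ρ hρD
    have h2 : τ.card < ρ.card :=
      Finset.card_lt_card (ssubset_of_ne_of_subset (fun h => hne h.symm) hsub)
    omega
  have hfp : IsFreePair M σ τ := ⟨hσM, hτM, hσsub, hσc, huniq⟩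
  set M' := (M.erase σ).erase τ with hM'def
  have hmemM' : ∀ {x : Finset α}, x ∈ M' ↔ x ∈ M ∧ x ≠ σ ∧ x ≠ τ := by
    intro x
    rw [hM'def, Finset.mem_erase, Finset.mem_erase]
    tauto
  have hM'sub : M' ⊆ M := fun x hx => (hmemM'.mp hx).1
  have hM'ss : M' ⊂ M := by
    refine ⟨hM'sub, fun h => ?_⟩
    have := h hσM
    exact (hmemM'.mp this).2.1 rfl
  have hVτnone : V τ = none := hnone τ hτD ⟨σ, hσV⟩
  -- M' is a complex
  have hM'c : IsComplex M' := by
    intro ρ hρ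
    have hρM : ρ ∈ M := hM'sub hρ
    obtain ⟨hρne, hsubs⟩ := hMc ρ hρM
    obtain ⟨-, hρσ, hρτ⟩ := hmemM'.mp hρ
    refine ⟨hρne, fun μ hμ hμne => ?_⟩
    have hμM : μ ∈ M := hsubs μ hμ hμne
    refine hmemM'.mpr ⟨hμM, ?_, ?_⟩
    · intro hms
      have hμρ : σ ⊆ ρ := hms ▸ hμ
      have hss : σ ⊂ ρ := ssubset_of_ne_of_subset (fun h => hρσ h.symm) hμρ
      have hcard : 1 + σ.card ≤ ρ.card := by
        have := Finset.card_lt_card hss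
        omega
      obtain ⟨ν, hν1, hν2, hν3⟩ := Finset.exists_subsuperset_card_eq hμρ (n := 1 + σ.card) (by omega) hcard
      have hνne : ν.Nonempty := by
        rw [← Finset.card_pos]; omega
      have hνM : ν ∈ M := hsubs ν hν2 hνne
      have hντ : ν = τ := huniq ν hνM hν1 (by omega)
      exact hρτ (hmaxτ ρ hρM (hντ ▸ hν2))
    · intro hmt
      exact hρτ (hmaxτ ρ hρM (hmt ▸ hμ))
  -- M' is V-compatible
  have hM'comp : VCompatible V (↑M' : Set (Finset α)) := by
    intro a b hab
    simp only [Finset.mem_coe]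
    rw [hmemM', hmemM']
    have hMM := hMcomp a b hab
    simp only [Finset.mem_coe] at hMM
    have haτ : a ≠ τ := by
      intro hat; rw [hat, hVτnone] at hab; exact Option.some_ne_none _ hab.symm
    have hbσ : b ≠ σ := by
      intro hbs
      rw [hbs] at hab
      have h4 := hV4 σ (by rw [hσV]; rfl) ⟨a, hab⟩
      rw [hσV] at h4
      exact hστne (Option.some_injective _ h4).symm
    constructor
    · rintro ⟨haM, haσ, -⟩
      refine ⟨hMM.mp haM, hbσ, ?_⟩
      intro hbt
      rw [hbt] at hab
      exact haσ (hV2 a σ τ hab hσV)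
    · rintro ⟨hbM, -, hbτ⟩
      refine ⟨hMM.mpr hbM, ?_, haτ⟩
      intro has
      rw [has, hσV] at hab
      exact hbτ (Option.some_injective _ hab).symm
  -- L ⊆ M'
  have hLM' : L ⊆ M' := by
    intro x hx
    refine hmemM'.mpr ⟨hLM hx, ?_, ?_⟩
    · intro h; rw [h] at hx; exact hσL hx
    · intro h; rw [h] at hx; exact hτL hx
  exact Relation.ReflTransGen.head ⟨σ, τ, hfp, rfl⟩
    (ih M' hM'ss (hM'sub.trans hMK) hM'c hM'comp hLM')
end

section
/- Let f : K → ℝᵏ be an mdm function and a ≺ b in ℝᵏ. If there is no critical simplex σ with f(σ) ∈ Q_a^b, then the sublevel complex K(b) collapses onto K(a). -/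
open Finset

variable {α : Type*} [DecidableEq α]

open Classical in
/-- The sublevel complex `K(a)`: the smallest subcomplex containing all simplices
`σ` with `f σ ≼ a`. -/
noncomputable def sublevel {k : ℕ} (K : Finset (Finset α)) (f : Finset α → Fin k → ℝ)
    (a : Fin k → ℝ) : Finset (Finset α) :=
  K.filter fun σ => ∃ τ ∈ K, σ ⊆ τ ∧ f τ ≤ a

set_option linter.unusedSectionVars false

section MorseAux

variable {k : ℕ}
variable {K : Finset (Finset α)} {f : Finset α → Fin k → ℝ}

/-- `MorsePr γ σ`: `σ` is a cofacet of `γ` with `f σ ≼ f γ` (a gradient pair). -/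
def MorsePr (K : Finset (Finset α)) (f : Finset α → Fin k → ℝ) (γ σ : Finset α) : Prop :=
  γ ∈ K ∧ σ ∈ K ∧ γ ⊆ σ ∧ σ.card = γ.card + 1 ∧ f σ ≤ f γ

lemma morsePr_mem_H {γ σ : Finset α} (h : MorsePr K f γ σ) : σ ∈ Hset K f γ :=
  ⟨h.2.1, h.2.2.1, h.2.2.2.1, h.2.2.2.2⟩

lemma morsePr_mem_T {γ σ : Finset α} (h : MorsePr K f γ σ) : γ ∈ Tset K f σ :=
  ⟨h.1, h.2.2.1, h.2.2.2.1, h.2.2.2.2⟩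

lemma up_unique (hf : IsMdm K f) {γ σ σ' : Finset α}
    (h1 : MorsePr K f γ σ) (h2 : MorsePr K f γ σ') : σ = σ' :=
  (hf γ h1.1).1 (morsePr_mem_H h1) (morsePr_mem_H h2)

lemma down_unique (hf : IsMdm K f) {γ γ' σ : Finset α}
    (h1 : MorsePr K f γ σ) (h2 : MorsePr K f γ' σ) : γ = γ' :=
  (hf σ h1.2.1).2.1 (morsePr_mem_T h1) (morsePr_mem_T h2)

/-- Forman's exclusion lemma: a simplex cannot be simultaneously the top of one
gradient pair and the bottom of another. -/
lemma morse_exclusion (hK : IsComplex K) (hf : IsMdm K f) {γ σ β : Finset α}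
    (h1 : MorsePr K f γ σ) (h2 : MorsePr K f σ β) : False := by
  obtain ⟨hγK, hσK, hγσ, hcard1, hfσγ⟩ := h1
  obtain ⟨-, hβK, hσβ, hcard2, hfβσ⟩ := h2
  -- pick the element x of σ \ γ, and set σ' = β.erase x
  have hx : (σ \ γ).Nonempty := by
    rw [← Finset.card_pos, Finset.card_sdiff_of_subset hγσ]; omega
  obtain ⟨x, hxmem⟩ := hx
  have hxσ : x ∈ σ := (Finset.mem_sdiff.mp hxmem).1
  have hxγ : x ∉ γ := (Finset.mem_sdiff.mp hxmem).2
  set σ' := β.erase x with hσ'def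
  have hσ'β : σ' ⊆ β := Finset.erase_subset _ _
  have hγσ' : γ ⊆ σ' := fun w hw =>
    Finset.mem_erase.mpr ⟨by rintro rfl; exact hxγ hw, hσβ (hγσ hw)⟩
  have hσ'ne : σ'.Nonempty := ((hK γ hγK).1).mono hγσ'
  have hσ'K : σ' ∈ K := (hK β hβK).2 σ' hσ'β hσ'ne
  have hxβ : x ∈ β := hσβ hxσ
  have hcardσ' : σ'.card = γ.card + 1 := by
    rw [hσ'def, Finset.card_erase_of_mem hxβ]; omega
  have hσσ' : σ ≠ σ' := by
    intro hss
    have : x ∈ σ' := hss ▸ hxσ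
    exact (Finset.mem_erase.mp this).1 rfl
  by_cases hTβ : f β ≤ f σ'
  · -- both σ and σ' are in Tset β
    have h1T : σ ∈ Tset K f β := ⟨hσK, hσβ, by omega, hfβσ⟩
    have h2T : σ' ∈ Tset K f β := ⟨hσ'K, hσ'β, by omega, hTβ⟩
    exact hσσ' ((hf β hβK).2.1 h1T h2T)
  · have hnotT : σ' ∉ Tset K f β := fun hm => hTβ hm.2.2.2
    have hlt1 := (hf β hβK).2.2.2 σ' hσ'K hσ'β (by omega) hnotT
    by_cases hHγ : f σ' ≤ f γ
    · -- both σ and σ' are in Hset γ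
      have h1H : σ ∈ Hset K f γ := ⟨hσK, hγσ, hcard1, hfσγ⟩
      have h2H : σ' ∈ Hset K f γ := ⟨hσ'K, hγσ', hcardσ', hHγ⟩
      exact hσσ' ((hf γ hγK).1 h1H h2H)
    · have hnotH : σ' ∉ Hset K f γ := fun hm => hHγ hm.2.2.2
      have hlt2 := (hf γ hγK).2.2.1 σ' hσ'K hγσ' hcardσ' hnotH
      -- f γ ≤ f σ' ≤ f β ≤ f σ ≤ f γ forces equality, contradiction
      exact hlt2.2 (le_antisymm hlt2.1 (hlt1.1.trans (hfβσ.trans hfσγ)))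

/-- Descent lemma: if `σ ⊆ τ` and `f τ ≼ c`, then either `f σ ≼ c` or `σ` has a
gradient cofacet inside `τ`. -/
lemma morse_descent (hK : IsComplex K) (hf : IsMdm K f) (c : Fin k → ℝ) :
    ∀ n (σ τ : Finset α), σ ∈ K → τ ∈ K → σ ⊆ τ → τ.card = σ.card + n → f τ ≤ c →
      f σ ≤ c ∨ ∃ ρ, MorsePr K f σ ρ ∧ ρ ⊆ τ := by
  intro n
  induction n with
  | zero =>
    intro σ τ hσ hτ hsub hcard hle
    have hst : σ = τ := Finset.eq_of_subset_of_card_le hsub (by omega)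
    exact Or.inl (hst ▸ hle)
  | succ n ih =>
    intro σ τ hσ hτ hsub hcard hle
    have key : ∀ z ∈ τ \ σ, τ.erase z ∉ Tset K f τ →
        (f σ ≤ c ∨ ∃ ρ, MorsePr K f σ ρ ∧ ρ ⊆ τ) := by
      intro z hz hnot
      have hzτ : z ∈ τ := (Finset.mem_sdiff.mp hz).1
      have hzσ : z ∉ σ := (Finset.mem_sdiff.mp hz).2
      set δ := τ.erase z with hδdef
      have hsubδ : σ ⊆ δ := fun w hw =>
        Finset.mem_erase.mpr ⟨by rintro rfl; exact hzσ hw, hsub hw⟩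
      have hδτ : δ ⊆ τ := Finset.erase_subset _ _
      have hδne : δ.Nonempty := ((hK σ hσ).1).mono hsubδ
      have hδK : δ ∈ K := (hK τ hτ).2 δ hδτ hδne
      have hcardδ : δ.card = σ.card + n := by
        rw [hδdef, Finset.card_erase_of_mem hzτ]; omega
      have hfle := (hf τ hτ).2.2.2 δ hδK hδτ (by omega) hnot
      rcases ih σ δ hσ hδK hsubδ hcardδ (hfle.1.trans hle) with h | ⟨ρ, hρ, hρδ⟩
      · exact Or.inl h
      · exact Or.inr ⟨ρ, hρ, hρδ.trans hδτ⟩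
    rcases Nat.eq_zero_or_pos n with h0 | hpos
    · -- σ is a facet of τ
      subst h0
      by_cases hfτ : f τ ≤ f σ
      · exact Or.inr ⟨τ, ⟨hσ, hτ, hsub, by omega, hfτ⟩, subset_rfl⟩
      · have hx : (τ \ σ).Nonempty := by
          rw [← Finset.card_pos, Finset.card_sdiff_of_subset hsub]; omega
        obtain ⟨z, hz⟩ := hx
        apply key z hz
        intro hm
        have hzτ : z ∈ τ := (Finset.mem_sdiff.mp hz).1
        have hzσ : z ∉ σ := (Finset.mem_sdiff.mp hz).2
        have hsubz : σ ⊆ τ.erase z := fun w hw =>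
          Finset.mem_erase.mpr ⟨by rintro rfl; exact hzσ hw, hsub hw⟩
        have hδσ : τ.erase z = σ :=
          (Finset.eq_of_subset_of_card_le hsubz
            (by rw [Finset.card_erase_of_mem hzτ]; omega)).symm
        rw [hδσ] at hm
        exact hfτ hm.2.2.2
    · -- at least two elements in τ \ σ, at most one facet is in Tset τ
      have hcard2 : 1 < (τ \ σ).card := by rw [Finset.card_sdiff_of_subset hsub]; omega
      obtain ⟨x, hx, y, hy, hxy⟩ := Finset.one_lt_card.mp hcard2
      by_cases hTx : τ.erase x ∈ Tset K f τ
      · apply key y hy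
        intro hTy
        have heq : τ.erase x = τ.erase y := (hf τ hτ).2.1 hTx hTy
        have hyx : y ∈ τ.erase x :=
          Finset.mem_erase.mpr ⟨hxy.symm, (Finset.mem_sdiff.mp hy).1⟩
        rw [heq] at hyx
        exact (Finset.mem_erase.mp hyx).1 rfl
      · exact key x hx hTx

lemma mem_sublevel {c : Fin k → ℝ} {σ : Finset α} :
    σ ∈ sublevel K f c ↔ σ ∈ K ∧ ∃ τ ∈ K, σ ⊆ τ ∧ f τ ≤ c := by
  classical
  simp [sublevel]

lemma sublevel_subset {c : Fin k → ℝ} : sublevel K f c ⊆ K := by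
  classical
  exact Finset.filter_subset _ _

lemma sublevel_closed {c : Fin k → ℝ} {γ σ : Finset α}
    (hγ : γ ∈ K) (hγσ : γ ⊆ σ) (hσ : σ ∈ sublevel K f c) : γ ∈ sublevel K f c := by
  obtain ⟨-, τ, hτK, hστ, hfτ⟩ := mem_sublevel.mp hσ
  exact mem_sublevel.mpr ⟨hγ, τ, hτK, hγσ.trans hστ, hfτ⟩

lemma sublevel_isComplex (hK : IsComplex K) {c : Fin k → ℝ} :
    IsComplex (sublevel K f c) := by
  intro σ hσ
  have hσK : σ ∈ K := sublevel_subset hσ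
  refine ⟨(hK σ hσK).1, fun τ hτσ hτne => ?_⟩
  exact sublevel_closed ((hK σ hσK).2 τ hτσ hτne) hτσ hσ

lemma sum_lt_of_lt {x y : Fin k → ℝ} (h : x < y) : ∑ i, x i < ∑ i, y i := by
  obtain ⟨hle, i, hi⟩ := Pi.lt_def.mp h
  exact Finset.sum_lt_sum (fun j _ => hle j) ⟨i, Finset.mem_univ i, hi⟩

/-- Main induction: any `V`-compatible complex `M` between `K(a)` and `K` whose
non-`K(a)` simplices are all matched within `M` collapses onto `K(a)`. -/
lemma morse_main (hK : IsComplex K) (hf : IsMdm K f) (a : Fin k → ℝ) :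
    ∀ (n : ℕ) (M : Finset (Finset α)), M.card ≤ n → M ⊆ K → IsComplex M →
      sublevel K f a ⊆ M →
      (∀ σ ∈ M, σ ∉ sublevel K f a →
        ∃ ρ ∈ M, ρ ∉ sublevel K f a ∧ (MorsePr K f σ ρ ∨ MorsePr K f ρ σ)) →
      Collapses M (sublevel K f a) := by
  classical
  intro n
  induction n with
  | zero =>
    intro M hcard hMK hMcx hLa hinv
    have : M = ∅ := Finset.card_eq_zero.mp (by omega)
    subst this
    have : sublevel K f a = ∅ := Finset.subset_empty.mp hLa
    rw [this]
    exact Relation.ReflTransGen.refl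
  | succ n ih =>
    intro M hcard hMK hMcx hLa hinv
    set La := sublevel K f a with hLadef
    by_cases hMeq : M = La
    · rw [hMeq]
      exact Relation.ReflTransGen.refl
    · -- there is a simplex outside La; find a maximal matched pair
      obtain ⟨σ0, hσ0M, hσ0La⟩ :=
        (Finset.ssubset_iff_of_subset hLa).mp (lt_of_le_of_ne hLa (Ne.symm hMeq))
      -- D : simplices of M \ La having an up-partner in M \ La
      set D := M.filter (fun γ => γ ∉ La ∧ ∃ β ∈ M, β ∉ La ∧ MorsePr K f γ β) with hDdef
      have hDne : D.Nonempty := by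
        obtain ⟨ρ, hρM, hρLa, hpr⟩ := hinv σ0 hσ0M hσ0La
        rcases hpr with hup | hdown
        · exact ⟨σ0, Finset.mem_filter.mpr ⟨hσ0M, hσ0La, ρ, hρM, hρLa, hup⟩⟩
        · exact ⟨ρ, Finset.mem_filter.mpr ⟨hρM, hρLa, σ0, hσ0M, hσ0La, hdown⟩⟩
      obtain ⟨αm, hαD, hαmax⟩ := D.exists_max_image (fun γ => ∑ i, f γ i) hDne
      obtain ⟨hαM, hαLa, β, hβM, hβLa, hpr⟩ := Finset.mem_filter.mp hαD
      have hαK : αm ∈ K := hMK hαM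
      -- αm is a free face of M with unique cofacet β
      have hmax' : ∀ γ ∈ M, γ ∉ La → (∃ β' ∈ M, β' ∉ La ∧ MorsePr K f γ β') →
          ¬ f αm < f γ := by
        intro γ hγM hγLa hup hlt
        have hγD : γ ∈ D := Finset.mem_filter.mpr ⟨hγM, hγLa, hup⟩
        exact absurd (hαmax γ hγD) (not_le_of_gt (sum_lt_of_lt hlt))
      have hfree : IsFreePair M αm β := by
        refine ⟨hαM, hβM, hpr.2.2.1, hpr.2.2.2.1, fun υ hυM hαυ hυcard => ?_⟩
        by_cases hfυ : f υ ≤ f αm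
        · exact up_unique hf ⟨hαK, hMK hυM, hαυ, hυcard, hfυ⟩ hpr
        · exfalso
          have hnotH : υ ∉ Hset K f αm := fun hm => hfυ hm.2.2.2
          have hlt := (hf αm hαK).2.2.1 υ (hMK hυM) hαυ hυcard hnotH
          have hltυ : f αm < f υ := lt_iff_le_and_ne.mpr hlt
          have hυLa : υ ∉ La := by
            intro hυLa
            exact hαLa (sublevel_closed hαK hαυ hυLa)
          obtain ⟨ρ, hρM, hρLa, hprυ⟩ := hinv υ hυM hυLa
          rcases hprυ with hup | hdown
          · exact hmax' υ hυM hυLa ⟨ρ, hρM, hρLa, hup⟩ hltυ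
          · exact hmax' ρ hρM hρLa ⟨υ, hυM, hυLa, hdown⟩
              (hltυ.trans_le hdown.2.2.2.2)
      -- the only supersets of αm in M are αm and β
      have hsup : ∀ υ ∈ M, αm ⊆ υ → υ = αm ∨ υ = β := by
        intro υ hυM hαυ
        have hle : αm.card ≤ υ.card := Finset.card_le_card hαυ
        rcases Nat.lt_or_ge υ.card (αm.card + 1) with h1 | h1
        · exact Or.inl (Finset.eq_of_subset_of_card_le hαυ (by omega)).symm
        rcases Nat.lt_or_ge υ.card (αm.card + 2) with h2 | h2
        · exact Or.inr (hfree.2.2.2.2 υ hυM hαυ (by omega))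
        · exfalso
          have hcard2 : 1 < (υ \ αm).card := by
            rw [Finset.card_sdiff_of_subset hαυ]; omega
          obtain ⟨x, hx, y, hy, hxy⟩ := Finset.one_lt_card.mp hcard2
          have hmk : ∀ z ∈ υ \ αm, insert z αm = β := by
            intro z hz
            have hzυ : z ∈ υ := (Finset.mem_sdiff.mp hz).1
            have hzα : z ∉ αm := (Finset.mem_sdiff.mp hz).2
            have hsub2 : insert z αm ⊆ υ := Finset.insert_subset hzυ hαυ
            have hne2 : (insert z αm).Nonempty := Finset.insert_nonempty _ _
            have hmem : insert z αm ∈ M := (hMcx υ hυM).2 _ hsub2 hne2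
            exact hfree.2.2.2.2 _ hmem (Finset.subset_insert _ _)
              (by rw [Finset.card_insert_of_notMem hzα])
          have : x ∈ insert y αm := by
            rw [hmk y hy, ← hmk x hx]; exact Finset.mem_insert_self _ _
          rcases Finset.mem_insert.mp this with h | h
          · exact hxy h
          · exact (Finset.mem_sdiff.mp hx).2 h
      set M' := (M.erase αm).erase β with hM'def
      have hM'mem : ∀ {σ : Finset α}, σ ∈ M' ↔ σ ≠ β ∧ σ ≠ αm ∧ σ ∈ M := by
        intro σ
        simp [hM'def, Finset.mem_erase, and_assoc]
      have hβα : β ≠ αm := by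
        intro h
        have := hpr.2.2.2.1
        rw [h] at this; omega
      have hstep : ElemCollapse M M' := ⟨αm, β, hfree, rfl⟩
      -- M' still satisfies all invariants
      have hM'M : M' ⊆ M := fun σ hσ => (hM'mem.mp hσ).2.2
      have hM'K : M' ⊆ K := hM'M.trans hMK
      have hM'cx : IsComplex M' := by
        intro σ hσ
        obtain ⟨hσβ, hσα, hσM⟩ := hM'mem.mp hσ
        refine ⟨(hMcx σ hσM).1, fun τ hτσ hτne => ?_⟩
        have hτM : τ ∈ M := (hMcx σ hσM).2 τ hτσ hτne
        refine hM'mem.mpr ⟨?_, ?_, hτM⟩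
        · rintro rfl
          rcases hsup σ hσM (hpr.2.2.1.trans hτσ) with h | h
          · exact hσα h
          · exact hσβ h
        · rintro rfl
          rcases hsup σ hσM hτσ with h | h
          · exact hσα h
          · exact hσβ h
      have hLaM' : La ⊆ M' := by
        intro σ hσ
        refine hM'mem.mpr ⟨?_, ?_, hLa hσ⟩
        · rintro rfl; exact hβLa hσ
        · rintro rfl; exact hαLa hσ
      have hinv' : ∀ σ ∈ M', σ ∉ La →
          ∃ ρ ∈ M', ρ ∉ La ∧ (MorsePr K f σ ρ ∨ MorsePr K f ρ σ) := by
        intro σ hσ hσLa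
        obtain ⟨hσβ, hσα, hσM⟩ := hM'mem.mp hσ
        obtain ⟨ρ, hρM, hρLa, hprρ⟩ := hinv σ hσM hσLa
        refine ⟨ρ, hM'mem.mpr ⟨?_, ?_, hρM⟩, hρLa, hprρ⟩
        · rintro rfl
          rcases hprρ with h | h
          · exact hσα (down_unique hf h hpr)
          · exact morse_exclusion hK hf hpr h
        · rintro rfl
          rcases hprρ with h | h
          · exact morse_exclusion hK hf h hpr
          · exact hσβ (up_unique hf h hpr)
      have hcard' : M'.card ≤ n := by
        have h1 : M' ⊂ M := by
          rw [Finset.ssubset_iff_of_subset hM'M]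
          exact ⟨αm, hαM, fun h => (hM'mem.mp h).2.1 rfl⟩
        have := Finset.card_lt_card h1
        omega
      exact Relation.ReflTransGen.head hstep (ih M' hcard' hM'K hM'cx hLaM' hinv')

end MorseAux

/-- If `a ≺ b` and no critical simplex `σ` has `f σ ∈ Q_a^b`
(i.e. `f σ ≼ b` and `¬ f σ ≼ a`), then `K(b)` collapses onto `K(a)`. -/
theorem stmt14 {k : ℕ} (K : Finset (Finset α)) (f : Finset α → Fin k → ℝ)
    (hK : IsComplex K) (hf : IsMdm K f) (a b : Fin k → ℝ)
    (hab : a ≤ b) (hne : a ≠ b)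
    (hno : ∀ σ ∈ K, IsCritical K f σ → ¬ (f σ ≤ b ∧ ¬ f σ ≤ a)) :
    Collapses (sublevel K f b) (sublevel K f a) := by
  classical
  set La := sublevel K f a with hLadef
  set Lb := sublevel K f b with hLbdef
  have hLaLb : La ⊆ Lb := by
    intro σ hσ
    obtain ⟨hσK, τ, hτK, hστ, hfτ⟩ := mem_sublevel.mp hσ
    exact mem_sublevel.mpr ⟨hσK, τ, hτK, hστ, hfτ.trans hab⟩
  apply morse_main hK hf a Lb.card Lb le_rfl sublevel_subset (sublevel_isComplex hK) hLaLb
  -- the matching invariant for Lb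
  intro σ hσ hσLa
  obtain ⟨hσK, τ, hτK, hστ, hfτb⟩ := mem_sublevel.mp hσ
  have hcards : τ.card = σ.card + (τ.card - σ.card) := by
    have := Finset.card_le_card hστ; omega
  -- σ is not critical
  have hnotcrit : ¬ IsCritical K f σ := by
    intro hcrit
    have hfσb : f σ ≤ b := by
      rcases morse_descent hK hf b (τ.card - σ.card) σ τ hσK hτK hστ hcards hfτb with
        h | ⟨ρ, hρ, -⟩
      · exact h
      · exact absurd (morsePr_mem_H hρ) (by rw [hcrit.1]; exact Set.notMem_empty _)
    have hfσa : ¬ f σ ≤ a := by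
      intro h
      exact hσLa (mem_sublevel.mpr ⟨hσK, σ, hσK, subset_rfl, h⟩)
    exact hno σ hσK hcrit ⟨hfσb, hfσa⟩
  rcases not_and_or.mp hnotcrit with hH | hT
  · -- Hset σ is nonempty: σ has an up-partner ρ
    obtain ⟨ρ, hρH⟩ := Set.nonempty_iff_ne_empty.mpr hH
    obtain ⟨hρK, hσρ, hρcard, hfρσ⟩ := hρH
    have hprρ : MorsePr K f σ ρ := ⟨hσK, hρK, hσρ, hρcard, hfρσ⟩
    have hρLb : ρ ∈ Lb := by
      rcases morse_descent hK hf b (τ.card - σ.card) σ τ hσK hτK hστ hcards hfτb with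
        h | ⟨ρ', hρ', hρ'τ⟩
      · exact mem_sublevel.mpr ⟨hρK, ρ, hρK, subset_rfl, hfρσ.trans h⟩
      · have : ρ' = ρ := up_unique hf hρ' hprρ
        subst this
        exact mem_sublevel.mpr ⟨hρK, τ, hτK, hρ'τ, hfτb⟩
    have hρLa : ρ ∉ La := by
      intro hρLa
      exact hσLa (sublevel_closed hσK hσρ hρLa)
    exact ⟨ρ, hρLb, hρLa, Or.inl hprρ⟩
  · -- Tset σ is nonempty: σ has a down-partner γ
    obtain ⟨γ, hγT⟩ := Set.nonempty_iff_ne_empty.mpr hT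
    obtain ⟨hγK, hγσ, hγcard, hfσγ⟩ := hγT
    have hprγ : MorsePr K f γ σ := ⟨hγK, hσK, hγσ, hγcard, hfσγ⟩
    have hγLb : γ ∈ Lb := sublevel_closed hγK hγσ hσ
    have hγLa : γ ∉ La := by
      intro hγLa
      obtain ⟨-, τ', hτ'K, hγτ', hfτ'a⟩ := mem_sublevel.mp hγLa
      have hcards' : τ'.card = γ.card + (τ'.card - γ.card) := by
        have := Finset.card_le_card hγτ'; omega
      rcases morse_descent hK hf a (τ'.card - γ.card) γ τ' hγK hτ'K hγτ' hcards' hfτ'a with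
        h | ⟨ρ', hρ', hρ'τ'⟩
      · exact hσLa (mem_sublevel.mpr ⟨hσK, σ, hσK, subset_rfl, hfσγ.trans h⟩)
      · have : ρ' = σ := up_unique hf hρ' hprγ
        subst this
        exact hσLa (mem_sublevel.mpr ⟨hσK, τ', hτ'K, hρ'τ', hfτ'a⟩)
    exact ⟨γ, hγLb, hγLa, Or.inr hprγ⟩
end
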